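/- arXiv:2204.00571 — 9 statements merged into one kernel-verified Lean document; each statement's English description precedes it below -/
import Mathlib

section
/- Let (Z,d) be a bounded metric space, let ν be a finite Borel measure on Z, let 1 ≤ p < ∞ and θ > 0. If f : Z → ℝ is ν-measurable and its Besov energy satisfies ‖f‖_{θ,p} < ∞, then ∫_Z |f|^p dν < ∞, i.e. f belongs to L^p(Z,ν). -/
open MeasureTheory Metric Filter
open scoped ENNReal

/-- The Besov energy `‖u‖_{θ,p}^p` of a function `u` on a metric measure space `(Z, d, ν)`:
`∫_Z ∫_Z |u(y) − u(x)|^p / (d(x,y)^{θp} · ν(B(x, d(x,y)))) dν(y) dν(x)`. -/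
noncomputable def besovEnergy {Z : Type*} [MetricSpace Z] [MeasurableSpace Z]
    (ν : Measure Z) (p θ : ℝ) (u : Z → ℝ) : ℝ≥0∞ :=
  ∫⁻ x, ∫⁻ y, ENNReal.ofReal (|u y - u x| ^ p) /
      (ENNReal.ofReal (dist x y ^ (θ * p)) * ν (ball x (dist x y))) ∂ν ∂ν

/-- `(a+b)^p ≤ 2^p (a^p + b^p)` in `ℝ≥0∞` for `p ≥ 0`. -/
lemma besov_aux_add_rpow {a b : ℝ≥0∞} {p : ℝ} (hp : 0 ≤ p) :
    (a + b) ^ p ≤ 2 ^ p * (a ^ p + b ^ p) := by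
  have h1 : a + b ≤ 2 * max a b := by
    rw [two_mul]
    exact add_le_add (le_max_left a b) (le_max_right a b)
  calc (a + b) ^ p ≤ (2 * max a b) ^ p := ENNReal.rpow_le_rpow h1 hp
    _ = 2 ^ p * (max a b) ^ p := ENNReal.mul_rpow_of_nonneg _ _ hp
    _ ≤ 2 ^ p * (a ^ p + b ^ p) := by
        gcongr
        rcases max_cases a b with ⟨h, _⟩ | ⟨h, _⟩ <;> rw [h]
        · exact le_add_right le_rfl
        · exact le_add_left le_rfl

/-- If `(Z,d)` is a bounded metric space, `ν` a finite Borel measure on `Z`, `1 ≤ p < ∞`,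
`θ > 0`, and `f : Z → ℝ` is `ν`-measurable with finite Besov energy `‖f‖_{θ,p} < ∞`,
then `∫_Z |f|^p dν < ∞`, i.e. `f ∈ L^p(Z,ν)`. -/
theorem besov_finite_energy_mem_Lp
    {Z : Type*} [MetricSpace Z] [MeasurableSpace Z]
    (ν : Measure Z) [IsFiniteMeasure ν]
    (hbdd : Bornology.IsBounded (Set.univ : Set Z))
    (p θ : ℝ) (hp : 1 ≤ p) (hθ : 0 < θ)
    (f : Z → ℝ) (hf : AEMeasurable f ν)
    (hfin : besovEnergy ν p θ f < ⊤) :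
    (∫⁻ x, ENNReal.ofReal (|f x| ^ p) ∂ν) < ⊤ ∧
      MemLp f (ENNReal.ofReal p) ν := by
  have hp0 : (0 : ℝ) < p := lt_of_lt_of_le zero_lt_one hp
  -- rewrite the integrand using enorms
  have hrw : ∀ a : ℝ, ENNReal.ofReal (|a| ^ p) = (‖a‖₊ : ℝ≥0∞) ^ p := by
    intro a
    rw [← enorm_eq_nnnorm, Real.enorm_eq_ofReal_abs,
      ENNReal.ofReal_rpow_of_nonneg (abs_nonneg a) hp0.le]
  have key : (∫⁻ x, ENNReal.ofReal (|f x| ^ p) ∂ν) < ⊤ := by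
    rcases eq_zero_or_neZero ν with hν | hν
    · simp [hν]
    · -- bound the distance
      obtain ⟨D0, hD0⟩ := Metric.isBounded_iff.mp hbdd
      set D : ℝ := max D0 1 with hD
      have hD1 : (1 : ℝ) ≤ D := le_max_right _ _
      have hDpos : (0 : ℝ) < D := lt_of_lt_of_le zero_lt_one hD1
      set C : ℝ≥0∞ := ENNReal.ofReal (D ^ (θ * p)) * ν Set.univ with hC
      have hCne_top : C ≠ ⊤ :=
        ENNReal.mul_ne_top ENNReal.ofReal_ne_top (measure_ne_top ν _)
      have hCne_zero : C ≠ 0 := by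
        apply mul_ne_zero
        · simp only [ne_eq, ENNReal.ofReal_eq_zero, not_le]
          positivity
        · exact (Measure.measure_univ_ne_zero).mpr (NeZero.ne ν)
      -- pointwise bound: the energy integrand dominates |f y - f x|^p / C
      have hpt : ∀ x y : Z, ENNReal.ofReal (|f y - f x| ^ p) ≤
          C * (ENNReal.ofReal (|f y - f x| ^ p) /
            (ENNReal.ofReal (dist x y ^ (θ * p)) * ν (ball x (dist x y)))) := by
        intro x y
        have hden : ENNReal.ofReal (dist x y ^ (θ * p)) * ν (ball x (dist x y)) ≤ C := by
          apply mul_le_mul'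
          · apply ENNReal.ofReal_le_ofReal
            apply Real.rpow_le_rpow dist_nonneg _ (by positivity)
            exact le_trans (hD0 (Set.mem_univ x) (Set.mem_univ y)) (le_max_left _ _)
          · exact measure_mono (Set.subset_univ _)
        have h1 : ENNReal.ofReal (|f y - f x| ^ p) / C ≤
            ENNReal.ofReal (|f y - f x| ^ p) /
              (ENNReal.ofReal (dist x y ^ (θ * p)) * ν (ball x (dist x y))) :=
          ENNReal.div_le_div_left hden _
        calc ENNReal.ofReal (|f y - f x| ^ p)
            = C * (ENNReal.ofReal (|f y - f x| ^ p) / C) := by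
              rw [ENNReal.mul_div_cancel hCne_zero hCne_top]
          _ ≤ _ := by exact mul_le_mul_right h1 C
      -- hence the double integral of |f y - f x|^p is finite
      have hI : (∫⁻ x, ∫⁻ y, ENNReal.ofReal (|f y - f x| ^ p) ∂ν ∂ν) < ⊤ := by
        have hle : (∫⁻ x, ∫⁻ y, ENNReal.ofReal (|f y - f x| ^ p) ∂ν ∂ν) ≤
            C * besovEnergy ν p θ f := by
          rw [besovEnergy, ← lintegral_const_mul' C _ hCne_top]
          apply lintegral_mono
          intro x
          dsimp only
          rw [← lintegral_const_mul' C _ hCne_top]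
          exact lintegral_mono fun y => hpt x y
        exact lt_of_le_of_lt hle (ENNReal.mul_lt_top hCne_top.lt_top hfin)
      -- find a point x₀ where the inner integral is finite
      have hx0 : ∃ x₀ : Z, (∫⁻ y, ENNReal.ofReal (|f y - f x₀| ^ p) ∂ν) < ⊤ := by
        by_contra h
        push_neg at h
        simp only [top_le_iff] at h
        have : (∫⁻ x, ∫⁻ y, ENNReal.ofReal (|f y - f x| ^ p) ∂ν ∂ν) = ⊤ := by
          rw [lintegral_congr h, lintegral_const,
            ENNReal.top_mul ((Measure.measure_univ_ne_zero).mpr (NeZero.ne ν))]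
        exact absurd this hI.ne
      obtain ⟨x₀, hx₀⟩ := hx0
      -- bound |f y|^p by 2^p (|f y - f x₀|^p + |f x₀|^p)
      have hbound : ∀ y : Z, ENNReal.ofReal (|f y| ^ p) ≤
          (2 : ℝ≥0∞) ^ p * (ENNReal.ofReal (|f y - f x₀| ^ p)
            + ENNReal.ofReal (|f x₀| ^ p)) := by
        intro y
        rw [hrw, hrw, hrw]
        have htri : (‖f y‖₊ : ℝ≥0∞) ≤ (‖f y - f x₀‖₊ : ℝ≥0∞) + (‖f x₀‖₊ : ℝ≥0∞) := by
          have := nnnorm_add_le (f y - f x₀) (f x₀)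
          simp only [sub_add_cancel] at this
          exact_mod_cast this
        calc (‖f y‖₊ : ℝ≥0∞) ^ p
            ≤ ((‖f y - f x₀‖₊ : ℝ≥0∞) + (‖f x₀‖₊ : ℝ≥0∞)) ^ p :=
              ENNReal.rpow_le_rpow htri hp0.le
          _ ≤ _ := besov_aux_add_rpow hp0.le
      calc (∫⁻ x, ENNReal.ofReal (|f x| ^ p) ∂ν)
          ≤ ∫⁻ y, (2 : ℝ≥0∞) ^ p * (ENNReal.ofReal (|f y - f x₀| ^ p)
              + ENNReal.ofReal (|f x₀| ^ p)) ∂ν := lintegral_mono hbound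
        _ = (2 : ℝ≥0∞) ^ p * ((∫⁻ y, ENNReal.ofReal (|f y - f x₀| ^ p) ∂ν)
              + ENNReal.ofReal (|f x₀| ^ p) * ν Set.univ) := by
            rw [lintegral_const_mul' _ _ (ENNReal.rpow_ne_top_of_nonneg hp0.le
              ENNReal.ofNat_ne_top), lintegral_add_right _ measurable_const,
              lintegral_const]
        _ < ⊤ := by
            apply ENNReal.mul_lt_top
            · exact ENNReal.rpow_lt_top_of_nonneg hp0.le ENNReal.ofNat_ne_top
            · exact ENNReal.add_lt_top.mpr ⟨hx₀,
                ENNReal.mul_lt_top ENNReal.ofReal_lt_top (measure_lt_top ν _)⟩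
  refine ⟨key, ?_⟩
  refine ⟨hf.aestronglyMeasurable, ?_⟩
  have hpne0 : ENNReal.ofReal p ≠ 0 := by
    simp only [ne_eq, ENNReal.ofReal_eq_zero, not_le]; exact hp0
  rw [eLpNorm_lt_top_iff_lintegral_rpow_enorm_lt_top hpne0 ENNReal.ofReal_ne_top,
    ENNReal.toReal_ofReal hp0.le]
  calc (∫⁻ a, (‖f a‖₊ : ℝ≥0∞) ^ p ∂ν)
      = ∫⁻ a, ENNReal.ofReal (|f a| ^ p) ∂ν := by
        apply lintegral_congr; intro a; rw [hrw]
    _ < ⊤ := key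
end

section
/- Let (Z,d) be a bounded metric space, let ν be a finite Borel measure on Z with ν(Z) > 0, let 1 ≤ p < ∞ and θ > 0. Then every f ∈ L^p(Z,ν) with Besov energy ‖f‖_{θ,p} < ∞ satisfies ‖f − f_Z‖_{L^p(ν)} ≤ diam(Z)^θ · ‖f‖_{θ,p}, where f_Z := ν(Z)^{-1} ∫_Z f dν. -/
open MeasureTheory Metric Filter
open scoped ENNReal

/-- If `(Z,d)` is a bounded metric space, `ν` a finite Borel measure with `ν(Z) > 0`,
`1 ≤ p < ∞`, `θ > 0`, then every `f ∈ L^p(Z,ν)` with finite Besov energy satisfies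
`‖f − f_Z‖_{L^p(ν)} ≤ diam(Z)^θ · ‖f‖_{θ,p}`, where `f_Z = ν(Z)⁻¹ ∫_Z f dν`. -/
theorem besov_Lp_mean_bound
    {Z : Type*} [MetricSpace Z] [MeasurableSpace Z]
    (ν : Measure Z) [IsFiniteMeasure ν]
    (hbdd : Bornology.IsBounded (Set.univ : Set Z))
    (hνpos : 0 < ν Set.univ)
    (p θ : ℝ) (hp : 1 ≤ p) (hθ : 0 < θ)
    (f : Z → ℝ) (hf : MemLp f (ENNReal.ofReal p) ν)
    (hfin : besovEnergy ν p θ f < ⊤) :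
    eLpNorm (fun x => f x - ⨍ y, f y ∂ν) (ENNReal.ofReal p) ν ≤
      ENNReal.ofReal (Metric.diam (Set.univ : Set Z) ^ θ) *
        besovEnergy ν p θ f ^ (1 / p) := by
  have hp0 : 0 < p := lt_of_lt_of_le one_pos hp
  set q := ENNReal.ofReal p with hq
  have hq1 : 1 ≤ q := ENNReal.one_le_ofReal.2 hp
  have hq0 : q ≠ 0 := (lt_of_lt_of_le one_pos hq1).ne'
  have hqt : q ≠ ∞ := ENNReal.ofReal_ne_top
  have hqr : q.toReal = p := ENNReal.toReal_ofReal hp0.le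
  set μ : Measure Z := (ν Set.univ)⁻¹ • ν with hμ
  have hν0 : ν Set.univ ≠ 0 := hνpos.ne'
  have hνt : ν Set.univ ≠ ∞ := measure_ne_top ν _
  have hinvt : (ν Set.univ)⁻¹ ≠ ∞ := ENNReal.inv_ne_top.2 hν0
  haveI hprob : IsProbabilityMeasure μ :=
    ⟨by simp [hμ, Measure.smul_apply, smul_eq_mul, ENNReal.inv_mul_cancel hν0 hνt]⟩
  have hfi : Integrable f ν := hf.integrable hq1
  have hfiμ : Integrable f μ := hfi.smul_measure hinvt
  set D : ℝ := Metric.diam (Set.univ : Set Z) with hD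
  set E : ℝ≥0∞ := besovEnergy ν p θ f with hE
  set C : ℝ≥0∞ := ENNReal.ofReal (D ^ (θ * p)) * ν Set.univ with hC
  have hCt : C ≠ ∞ := ENNReal.mul_ne_top ENNReal.ofReal_ne_top hνt
  -- pointwise bound for the Besov kernel
  have kernelbd : ∀ x y : Z,
      ENNReal.ofReal (|f y - f x| ^ p) ≤
        (ENNReal.ofReal (|f y - f x| ^ p) /
          (ENNReal.ofReal (dist x y ^ (θ * p)) * ν (ball x (dist x y)))) * C := by
    intro x y
    rcases eq_or_ne x y with rfl | hxy
    · simp [Real.zero_rpow (ne_of_gt hp0)]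
    · have hd : 0 < dist x y := dist_pos.2 hxy
      have hdD : dist x y ≤ D := dist_le_diam_of_mem hbdd trivial trivial
      set a := ENNReal.ofReal (|f y - f x| ^ p)
      set b := ENNReal.ofReal (dist x y ^ (θ * p)) * ν (ball x (dist x y)) with hb
      have hbC : b ≤ C := by
        apply mul_le_mul'
        · exact ENNReal.ofReal_le_ofReal
            (Real.rpow_le_rpow hd.le hdD (by positivity))
        · exact measure_mono (Set.subset_univ _)
      rcases eq_or_ne b 0 with hb0 | hb0
      · rcases eq_or_ne a 0 with ha0 | ha0
        · simp [ha0]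
        · have : a / b = ∞ := by
            rw [hb0, ENNReal.div_zero ha0]
          rw [this]
          have hC0 : C ≠ 0 := by
            apply mul_ne_zero
            · simp only [ne_eq, ENNReal.ofReal_eq_zero, not_le]
              exact Real.rpow_pos_of_pos (lt_of_lt_of_le hd hdD) _
            · exact hν0
          rw [ENNReal.top_mul hC0]
          exact le_top
      · have hbt : b ≠ ∞ := ENNReal.mul_ne_top ENNReal.ofReal_ne_top (measure_ne_top ν _)
        calc a = a / b * b := (ENNReal.div_mul_cancel hb0 hbt).symm
          _ ≤ a / b * C := mul_le_mul_right hbC _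
  -- per-x Jensen bound
  have jensen : ∀ x : Z,
      (ENNReal.ofReal |f x - ⨍ y, f y ∂ν|) ^ p ≤
        ∫⁻ y, ENNReal.ofReal (|f y - f x| ^ p) ∂μ := by
    intro x
    have hmeas : AEStronglyMeasurable (fun y => f y - f x) μ :=
      hfiμ.1.sub aestronglyMeasurable_const
    have hint : Integrable (fun y => f y - f x) μ := hfiμ.sub (integrable_const _)
    have havg : f x - ⨍ y, f y ∂ν = ∫ y, (f x - f y) ∂μ := by
      have hav : (⨍ y, f y ∂ν) = ∫ y, f y ∂μ := rfl
      rw [integral_sub (integrable_const _) hfiμ, integral_const, probReal_univ, hav]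
      simp
    have h1 : ENNReal.ofReal |f x - ⨍ y, f y ∂ν| ≤ eLpNorm (fun y => f y - f x) 1 μ := by
      rw [havg]
      have := norm_integral_le_integral_norm (μ := μ) (f := fun y => f x - f y)
      rw [eLpNorm_one_eq_lintegral_enorm]
      calc ENNReal.ofReal |∫ y, (f x - f y) ∂μ|
          ≤ ENNReal.ofReal (∫ y, ‖f x - f y‖ ∂μ) := ENNReal.ofReal_le_ofReal this
        _ = ∫⁻ y, ‖f x - f y‖ₑ ∂μ := ofReal_integral_norm_eq_lintegral_enorm (hint.neg.congr (Filter.Eventually.of_forall fun y => neg_sub _ _))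
        _ = ∫⁻ y, ‖f y - f x‖ₑ ∂μ := by
            congr 1; ext y; rw [← enorm_neg]; congr 1; ring
    have h2 : eLpNorm (fun y => f y - f x) 1 μ ≤ eLpNorm (fun y => f y - f x) q μ :=
      eLpNorm_le_eLpNorm_of_exponent_le hq1 hmeas
    have h3 := (h1.trans h2)
    calc (ENNReal.ofReal |f x - ⨍ y, f y ∂ν|) ^ p
        ≤ (eLpNorm (fun y => f y - f x) q μ) ^ p := ENNReal.rpow_le_rpow h3 hp0.le
      _ = ∫⁻ y, ENNReal.ofReal (|f y - f x| ^ p) ∂μ := by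
          rw [eLpNorm_eq_lintegral_rpow_enorm_toReal hq0 hqt, hqr, ← ENNReal.rpow_mul,
            one_div_mul_cancel hp0.ne', ENNReal.rpow_one]
          congr 1; ext y
          rw [Real.enorm_eq_ofReal_abs, ← ENNReal.ofReal_rpow_of_nonneg (abs_nonneg _) hp0.le]
  -- main integral bound
  have main : ∫⁻ x, (ENNReal.ofReal |f x - ⨍ y, f y ∂ν|) ^ p ∂ν ≤
      ENNReal.ofReal (D ^ (θ * p)) * E := by
    calc ∫⁻ x, (ENNReal.ofReal |f x - ⨍ y, f y ∂ν|) ^ p ∂ν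
        ≤ ∫⁻ x, (∫⁻ y, ENNReal.ofReal (|f y - f x| ^ p) ∂μ) ∂ν :=
          lintegral_mono jensen
      _ = ∫⁻ x, (ν Set.univ)⁻¹ * ∫⁻ y, ENNReal.ofReal (|f y - f x| ^ p) ∂ν ∂ν := by
          simp only [hμ, lintegral_smul_measure, smul_eq_mul]
      _ = (ν Set.univ)⁻¹ * ∫⁻ x, (∫⁻ y, ENNReal.ofReal (|f y - f x| ^ p) ∂ν) ∂ν :=
          lintegral_const_mul' _ _ hinvt
      _ ≤ (ν Set.univ)⁻¹ * (E * C) := by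
          apply mul_le_mul_right
          calc ∫⁻ x, (∫⁻ y, ENNReal.ofReal (|f y - f x| ^ p) ∂ν) ∂ν
              ≤ ∫⁻ x, ((∫⁻ y, ENNReal.ofReal (|f y - f x| ^ p) /
                  (ENNReal.ofReal (dist x y ^ (θ * p)) * ν (ball x (dist x y))) ∂ν) * C) ∂ν := by
                apply lintegral_mono
                intro x
                dsimp only
                rw [← lintegral_mul_const' C _ hCt]
                exact lintegral_mono fun y => kernelbd x y
            _ = E * C := by
                rw [lintegral_mul_const' C _ hCt]; rfl
      _ = ENNReal.ofReal (D ^ (θ * p)) * E := by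
          have : (ν Set.univ)⁻¹ * (E * C) =
              ((ν Set.univ)⁻¹ * ν Set.univ) * (ENNReal.ofReal (D ^ (θ * p)) * E) := by
            rw [hC]; ac_rfl
          rw [this, ENNReal.inv_mul_cancel hν0 hνt, one_mul]
  -- conclude
  rw [eLpNorm_eq_lintegral_rpow_enorm_toReal hq0 hqt, hqr]
  have : ∫⁻ x, (‖f x - ⨍ y, f y ∂ν‖ₑ : ℝ≥0∞) ^ p ∂ν ≤ ENNReal.ofReal (D ^ (θ * p)) * E := by
    refine le_trans (le_of_eq ?_) main
    congr 1; ext x; rw [Real.enorm_eq_ofReal_abs]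
  calc (∫⁻ x, (‖f x - ⨍ y, f y ∂ν‖ₑ : ℝ≥0∞) ^ p ∂ν) ^ (1 / p)
      ≤ (ENNReal.ofReal (D ^ (θ * p)) * E) ^ (1 / p) :=
        ENNReal.rpow_le_rpow this (by positivity)
    _ = ENNReal.ofReal (D ^ θ) * E ^ (1 / p) := by
        rw [ENNReal.mul_rpow_of_nonneg _ _ (by positivity : (0:ℝ) ≤ 1 / p)]
        congr 1
        rw [ENNReal.ofReal_rpow_of_nonneg (by positivity) (by positivity : (0:ℝ) ≤ 1 / p)]
        congr 1
        rw [← Real.rpow_mul (hD ▸ diam_nonneg : (0:ℝ) ≤ D)]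
        congr 1
        field_simp
end

section
/- Let (Z,d) be a bounded metric space and let ν be a finite Borel measure on Z with ν(Z) > 0 and such that ν(B(x,r)) > 0 for every x ∈ Z and every r > 0. Let 1 ≤ p < ∞ and θ > 0. If u : Z → ℝ is ν-measurable and its Besov energy satisfies ‖u‖_{θ,p} = 0, then there is a constant c ∈ ℝ such that u = c ν-almost everywhere on Z. -/
open MeasureTheory Metric Filter
open scoped ENNReal

/-- If the Besov energy of a `ν`-measurable function `u` vanishes (where `ν` is a finite
Borel measure on a bounded metric space giving positive measure to every ball), then
`u` is `ν`-a.e. equal to a constant. -/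
theorem besov_energy_zero_ae_const
    {Z : Type*} [MetricSpace Z] [MeasurableSpace Z]
    (ν : Measure Z) [IsFiniteMeasure ν]
    (hbdd : Bornology.IsBounded (Set.univ : Set Z))
    (hνpos : 0 < ν Set.univ)
    (hball : ∀ (x : Z) (r : ℝ), 0 < r → 0 < ν (ball x r))
    (p θ : ℝ) (hp : 1 ≤ p) (hθ : 0 < θ)
    (u : Z → ℝ) (hu : AEMeasurable u ν)
    (hzero : besovEnergy ν p θ u = 0) :
    ∃ c : ℝ, ∀ᵐ x ∂ν, u x = c := by
  have hp0 : (0:ℝ) < p := lt_of_lt_of_le one_pos hp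
  have hθp : (0:ℝ) < θ * p := mul_pos hθ hp0
  obtain ⟨D, hD⟩ := Metric.isBounded_iff.1 hbdd
  set D' : ℝ := max D 1 with hD'def
  set C : ℝ≥0∞ := ENNReal.ofReal (D' ^ (θ * p)) * ν Set.univ with hCdef
  have hC_ne_top : C ≠ ∞ :=
    ENNReal.mul_ne_top ENNReal.ofReal_ne_top (measure_ne_top ν _)
  -- denominator bound
  have hden : ∀ x y : Z,
      ENNReal.ofReal (dist x y ^ (θ * p)) * ν (ball x (dist x y)) ≤ C := by
    intro x y
    refine mul_le_mul' (ENNReal.ofReal_le_ofReal ?_) (measure_mono (Set.subset_univ _))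
    exact Real.rpow_le_rpow dist_nonneg
      (le_trans (hD (Set.mem_univ x) (Set.mem_univ y)) (le_max_left _ _)) hθp.le
  set F : Z × Z → ℝ≥0∞ := fun z => ENNReal.ofReal (|u z.2 - u z.1| ^ p) / C with hFdef
  have hF : AEMeasurable F (ν.prod ν) := by
    have h1 : AEMeasurable (fun z : Z × Z => u z.1) (ν.prod ν) :=
      hu.comp_quasiMeasurePreserving Measure.quasiMeasurePreserving_fst
    have h2 : AEMeasurable (fun z : Z × Z => u z.2) (ν.prod ν) :=
      hu.comp_quasiMeasurePreserving Measure.quasiMeasurePreserving_snd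
    have hnum : AEMeasurable
        (fun z : Z × Z => ENNReal.ofReal (|u z.2 - u z.1| ^ p)) (ν.prod ν) := by
      have heq : (fun z : Z × Z => ENNReal.ofReal (|u z.2 - u z.1| ^ p))
          = fun z => (ENNReal.ofReal |u z.2 - u z.1|) ^ p := by
        funext z; rw [← ENNReal.ofReal_rpow_of_nonneg (abs_nonneg _) hp0.le]
      rw [heq]
      exact ((h2.sub h1).norm.ennreal_ofReal).pow_const p
    exact hnum.div_const C
  have h1 : ∫⁻ z, F z ∂(ν.prod ν) = 0 := by
    rw [MeasureTheory.lintegral_prod _ hF]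
    refine le_antisymm ?_ zero_le
    rw [← hzero]
    unfold besovEnergy
    refine lintegral_mono fun x => lintegral_mono fun y => ?_
    exact ENNReal.div_le_div_left (hden x y) _
  have h2 : F =ᵐ[ν.prod ν] 0 := (lintegral_eq_zero_iff' hF).1 h1
  have h3 : ∀ᵐ z ∂ν.prod ν, u z.2 = u z.1 := by
    filter_upwards [h2] with z hz
    simp only [hFdef, Pi.zero_apply, ENNReal.div_eq_zero_iff] at hz
    rcases hz with hz | hz
    · rw [ENNReal.ofReal_eq_zero] at hz
      have habs : |u z.2 - u z.1| ^ p = 0 :=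
        le_antisymm hz (Real.rpow_nonneg (abs_nonneg _) p)
      have := (Real.rpow_eq_zero (abs_nonneg _) hp0.ne').1 habs
      have := abs_eq_zero.1 this
      linarith
    · exact absurd hz hC_ne_top
  have h4 := Measure.ae_ae_of_ae_prod h3
  have hne : (ae ν).NeBot := ae_neBot.2 (by
    intro h
    rw [h] at hνpos
    simp at hνpos)
  obtain ⟨x₀, hx₀⟩ := h4.exists
  exact ⟨u x₀, hx₀⟩
end

section
/- Let (Z,d) be a bounded metric space, let ν be a finite Borel measure on Z with ν(Z) > 0, let 1 < p < ∞ with Hölder conjugate p' = p/(p−1), and let θ > 0. If f ∈ L^{p'}(Z,ν) satisfies ∫_Z f dν = 0 and φ ∈ L^p(Z,ν) has Besov energy ‖φ‖_{θ,p} < ∞, then |∫_Z φ f dν| ≤ diam(Z)^θ · ‖φ‖_{θ,p} · ‖f‖_{L^{p'}(ν)}. -/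
open MeasureTheory Metric Filter
open scoped ENNReal

private lemma memLp_comp_fst' {Z : Type*} [MeasurableSpace Z]
    {ν : Measure Z} [IsFiniteMeasure ν] {q : ℝ≥0∞} {g : Z → ℝ}
    (hg : MemLp g q ν) : MemLp (fun z : Z × Z => g z.1) q (ν.prod ν) := by
  have hmap : Measure.map Prod.fst (ν.prod ν) = (ν Set.univ) • ν :=
    Measure.map_fst_prod
  have hsm : MemLp g q ((ν Set.univ) • ν) := hg.smul_measure (measure_ne_top ν _)
  have h1 : MemLp g q (Measure.map Prod.fst (ν.prod ν)) := by rw [hmap]; exact hsm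
  exact (memLp_map_measure_iff h1.1 measurable_fst.aemeasurable).mp h1

private lemma memLp_comp_snd' {Z : Type*} [MeasurableSpace Z]
    {ν : Measure Z} [IsFiniteMeasure ν] {q : ℝ≥0∞} {g : Z → ℝ}
    (hg : MemLp g q ν) : MemLp (fun z : Z × Z => g z.2) q (ν.prod ν) := by
  have hmap : Measure.map Prod.snd (ν.prod ν) = (ν Set.univ) • ν :=
    Measure.map_snd_prod
  have hsm : MemLp g q ((ν Set.univ) • ν) := hg.smul_measure (measure_ne_top ν _)
  have h1 : MemLp g q (Measure.map Prod.snd (ν.prod ν)) := by rw [hmap]; exact hsm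
  exact (memLp_map_measure_iff h1.1 measurable_snd.aemeasurable).mp h1

/-- If `f ∈ L^{p'}(Z,ν)` has zero mean and `φ ∈ L^p(Z,ν)` has finite Besov energy, then
`|∫_Z φ f dν| ≤ diam(Z)^θ · ‖φ‖_{θ,p} · ‖f‖_{L^{p'}(ν)}`, where `p' = p/(p−1)`. -/
theorem besov_pairing_bound
    {Z : Type*} [MetricSpace Z] [MeasurableSpace Z]
    (ν : Measure Z) [IsFiniteMeasure ν]
    (hbdd : Bornology.IsBounded (Set.univ : Set Z))
    (hνpos : 0 < ν Set.univ)
    (p p' θ : ℝ) (hp : 1 < p) (hp' : p' = p / (p - 1)) (hθ : 0 < θ)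
    (f : Z → ℝ) (hf : MemLp f (ENNReal.ofReal p') ν)
    (hf0 : ∫ x, f x ∂ν = 0)
    (φ : Z → ℝ) (hφ : MemLp φ (ENNReal.ofReal p) ν)
    (hφfin : besovEnergy ν p θ φ < ⊤) :
    |∫ x, φ x * f x ∂ν| ≤
      Metric.diam (Set.univ : Set Z) ^ θ *
        (besovEnergy ν p θ φ ^ (1 / p)).toReal *
        (eLpNorm f (ENNReal.ofReal p') ν).toReal := by
  have hp0 : (0:ℝ) < p := lt_trans one_pos hp
  have hpq : p.HolderConjugate p' := (Real.holderConjugate_iff_eq_conjExponent hp).mpr hp'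
  have hp'1 : (1:ℝ) < p' := hpq.symm.lt
  have hp'0 : (0:ℝ) < p' := lt_trans one_pos hp'1
  set c : ℝ := (ν Set.univ).toReal with hc_def
  have hc : (0:ℝ) < c := ENNReal.toReal_pos hνpos.ne' (measure_ne_top _ _)
  set D : ℝ := Metric.diam (Set.univ : Set Z) with hD_def
  have hD0 : 0 ≤ D := Metric.diam_nonneg
  set E : ℝ≥0∞ := besovEnergy ν p θ φ with hE_def
  -- basic integrabilities
  have hφ1 : Integrable φ ν := hφ.integrable (ENNReal.one_le_ofReal.mpr hp.le)
  have hf1 : Integrable f ν := hf.integrable (ENNReal.one_le_ofReal.mpr hp'1.le)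
  have hsum : (1:ℝ≥0∞) / ENNReal.ofReal p + 1 / ENNReal.ofReal p' = 1 := by
    rw [one_div, one_div, ← ENNReal.ofReal_inv_of_pos hp0, ← ENNReal.ofReal_inv_of_pos hp'0,
      ← ENNReal.ofReal_add (by positivity) (by positivity), hpq.inv_add_inv_eq_one,
      ENNReal.ofReal_one]
  have hφf : Integrable (fun x => φ x * f x) ν := by
    have : MemLp (φ • f) 1 ν := hf.smul hφ (hpqr := ⟨by simpa [one_div] using hsum⟩)
    simpa [Pi.smul_apply, smul_eq_mul, Pi.mul_def] using memLp_one_iff_integrable.mp this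
  -- product space objects
  have hFfst := memLp_comp_fst' (ν := ν) hφ
  have hFsnd := memLp_comp_snd' (ν := ν) hφ
  have hF : MemLp (fun z : Z × Z => φ z.1 - φ z.2) (ENNReal.ofReal p) (ν.prod ν) :=
    hFfst.sub hFsnd
  have hG : MemLp (fun z : Z × Z => f z.1) (ENNReal.ofReal p') (ν.prod ν) :=
    memLp_comp_fst' (ν := ν) hf
  have hFG : Integrable (fun z : Z × Z => (φ z.1 - φ z.2) * f z.1) (ν.prod ν) := by
    have : MemLp ((fun z : Z × Z => φ z.1 - φ z.2) • (fun z : Z × Z => f z.1)) 1 (ν.prod ν) :=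
      hG.smul hF (hpqr := ⟨by simpa [one_div] using hsum⟩)
    simpa [Pi.smul_apply, smul_eq_mul, Pi.mul_def] using memLp_one_iff_integrable.mp this
  -- Fubini identity
  have inner : ∀ x, (∫ y, (φ x - φ y) * f x ∂ν) = c * (φ x * f x) - (∫ y, φ y ∂ν) * f x := by
    intro x
    rw [integral_mul_const, integral_sub (integrable_const _) hφ1, integral_const]
    simp only [smul_eq_mul, measureReal_def, ← hc_def]
    ring
  have key : (∫ z : Z × Z, (φ z.1 - φ z.2) * f z.1 ∂(ν.prod ν)) = c * ∫ x, φ x * f x ∂ν := by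
    rw [MeasureTheory.integral_prod _ hFG]
    calc (∫ x, ∫ y, (φ x - φ y) * f x ∂ν ∂ν)
        = ∫ x, (c * (φ x * f x) - (∫ y, φ y ∂ν) * f x) ∂ν :=
          integral_congr_ae (Eventually.of_forall inner)
      _ = c * (∫ x, φ x * f x ∂ν) - (∫ y, φ y ∂ν) * ∫ x, f x ∂ν := by
          rw [integral_sub (hφf.const_mul c) (hf1.const_mul _), integral_const_mul,
            integral_const_mul]
      _ = c * ∫ x, φ x * f x ∂ν := by rw [hf0]; ring
  -- Hölder on the product
  have holder := integral_mul_norm_le_Lp_mul_Lq (μ := ν.prod ν) hpq hF hG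
  -- bound the f-factor
  have hGint : Integrable (fun z : Z × Z => ‖f z.1‖ ^ p') (ν.prod ν) := by
    have := hG.integrable_norm_rpow (by simp [ENNReal.ofReal_eq_zero, not_le, hp'0])
      ENNReal.ofReal_ne_top
    simpa [ENNReal.toReal_ofReal hp'0.le] using this
  have hGeq : (∫ z : Z × Z, ‖f z.1‖ ^ p' ∂(ν.prod ν)) = c * ∫ x, ‖f x‖ ^ p' ∂ν := by
    rw [MeasureTheory.integral_prod _ hGint]
    simp_rw [integral_const, smul_eq_mul, measureReal_def, ← hc_def]
    rw [integral_const_mul]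
  have hfnorm : (∫ x, ‖f x‖ ^ p' ∂ν) ^ (1 / p') = (eLpNorm f (ENNReal.ofReal p') ν).toReal := by
    rw [hf.eLpNorm_eq_integral_rpow_norm (by simp [ENNReal.ofReal_eq_zero, not_le, hp'0])
      ENNReal.ofReal_ne_top]
    rw [ENNReal.toReal_ofReal (by positivity), ENNReal.toReal_ofReal hp'0.le, one_div]
  -- pointwise energy comparison
  set K : ℝ≥0∞ := ENNReal.ofReal (D ^ (θ * p)) * ν Set.univ with hK_def
  have hKtop : K ≠ ∞ := ENNReal.mul_ne_top ENNReal.ofReal_ne_top (measure_ne_top _ _)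
  have hpoint : ∀ x y : Z, ENNReal.ofReal (|φ y - φ x| ^ p) ≤
      K * (ENNReal.ofReal (|φ y - φ x| ^ p) /
        (ENNReal.ofReal (dist x y ^ (θ * p)) * ν (ball x (dist x y)))) := by
    intro x y
    set a := ENNReal.ofReal (|φ y - φ x| ^ p) with ha_def
    set b := ENNReal.ofReal (dist x y ^ (θ * p)) * ν (ball x (dist x y)) with hb_def
    rcases eq_or_ne a 0 with h0 | h0
    · simp [h0]
    have hxy : x ≠ y := by
      rintro rfl
      apply h0
      simp [ha_def, Real.zero_rpow hp0.ne']
    have hd : 0 < dist x y := dist_pos.mpr hxy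
    have hdD : dist x y ≤ D := Metric.dist_le_diam_of_mem hbdd trivial trivial
    have hDpos : 0 < D := lt_of_lt_of_le hd hdD
    have hbK : b ≤ K := by
      refine mul_le_mul' (ENNReal.ofReal_le_ofReal ?_) (measure_mono (Set.subset_univ _))
      exact Real.rpow_le_rpow dist_nonneg hdD (by positivity)
    rcases eq_or_ne b 0 with hb | hb
    · rw [hb, ENNReal.div_zero h0]
      have hK0 : K ≠ 0 := by
        simp only [hK_def, ne_eq, mul_eq_zero, not_or, ENNReal.ofReal_eq_zero, not_le]
        exact ⟨Real.rpow_pos_of_pos hDpos _, hνpos.ne'⟩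
      rw [ENNReal.mul_top hK0]
      exact le_top
    · have hbtop : b ≠ ∞ := ENNReal.mul_ne_top ENNReal.ofReal_ne_top (measure_ne_top _ _)
      calc a = a / b * b := (ENNReal.div_mul_cancel hb hbtop).symm
        _ ≤ a / b * K := mul_le_mul_right hbK _
        _ = K * (a / b) := mul_comm _ _
  have hA : (∫⁻ x, ∫⁻ y, ENNReal.ofReal (|φ y - φ x| ^ p) ∂ν ∂ν) ≤ K * E := by
    calc (∫⁻ x, ∫⁻ y, ENNReal.ofReal (|φ y - φ x| ^ p) ∂ν ∂ν)
        ≤ ∫⁻ x, ∫⁻ y, K * (ENNReal.ofReal (|φ y - φ x| ^ p) /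
            (ENNReal.ofReal (dist x y ^ (θ * p)) * ν (ball x (dist x y)))) ∂ν ∂ν :=
          lintegral_mono fun x => lintegral_mono fun y => hpoint x y
      _ = K * E := by
          simp_rw [lintegral_const_mul' K _ hKtop]
          rfl
  have hKE_top : K * E ≠ ∞ := ENNReal.mul_ne_top hKtop hφfin.ne
  -- bound the φ-factor
  have hFmeas : AEStronglyMeasurable (fun z : Z × Z => ‖φ z.1 - φ z.2‖ ^ p) (ν.prod ν) :=
    (Real.continuous_rpow_const hp0.le).comp_aestronglyMeasurable hF.1.norm
  have hFub : (∫ z : Z × Z, ‖φ z.1 - φ z.2‖ ^ p ∂(ν.prod ν)) ≤ (K * E).toReal := by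
    have h1 : (∫ z : Z × Z, ‖φ z.1 - φ z.2‖ ^ p ∂(ν.prod ν)) =
        (∫⁻ z : Z × Z, ENNReal.ofReal (‖φ z.1 - φ z.2‖ ^ p) ∂(ν.prod ν)).toReal := by
      rw [integral_eq_lintegral_of_nonneg_ae (Eventually.of_forall fun z => by positivity) hFmeas]
    have haem : AEMeasurable (fun z : Z × Z => ENNReal.ofReal (‖φ z.1 - φ z.2‖ ^ p))
        (ν.prod ν) := ENNReal.measurable_ofReal.comp_aemeasurable hFmeas.aemeasurable
    have h2 : (∫⁻ z : Z × Z, ENNReal.ofReal (‖φ z.1 - φ z.2‖ ^ p) ∂(ν.prod ν)) =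
        ∫⁻ x, ∫⁻ y, ENNReal.ofReal (|φ y - φ x| ^ p) ∂ν ∂ν := by
      rw [MeasureTheory.lintegral_prod _ haem]
      simp_rw [Real.norm_eq_abs]
      congr 1
      ext x
      congr 1
      ext y
      rw [abs_sub_comm]
    rw [h1, h2]
    exact ENNReal.toReal_mono hKE_top hA
  have hKEtoReal : (K * E).toReal = D ^ (θ * p) * c * E.toReal := by
    rw [ENNReal.toReal_mul, ENNReal.toReal_mul, ENNReal.toReal_ofReal (by positivity)]
  have hFle : (∫ z : Z × Z, ‖φ z.1 - φ z.2‖ ^ p ∂(ν.prod ν)) ^ (1 / p) ≤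
      D ^ θ * c ^ (1 / p) * (E ^ (1 / p)).toReal := by
    have h1 : (∫ z : Z × Z, ‖φ z.1 - φ z.2‖ ^ p ∂(ν.prod ν)) ^ (1 / p) ≤
        ((K * E).toReal) ^ (1 / p) :=
      Real.rpow_le_rpow (integral_nonneg fun z => by positivity) hFub (by positivity)
    refine h1.trans_eq ?_
    rw [hKEtoReal, Real.mul_rpow (by positivity) ENNReal.toReal_nonneg,
      Real.mul_rpow (by positivity) hc.le]
    congr 1
    · congr 1
      rw [← Real.rpow_mul hD0, mul_one_div, mul_div_cancel_right₀ θ hp0.ne']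
    · exact ENNReal.toReal_rpow E (1 / p)
  -- assemble everything
  have habs : |∫ x, φ x * f x ∂ν| ≤
      c⁻¹ * ((∫ z : Z × Z, ‖φ z.1 - φ z.2‖ ^ p ∂(ν.prod ν)) ^ (1 / p) *
        (∫ z : Z × Z, ‖f z.1‖ ^ p' ∂(ν.prod ν)) ^ (1 / p')) := by
    have h1 : ∫ x, φ x * f x ∂ν = c⁻¹ * ∫ z : Z × Z, (φ z.1 - φ z.2) * f z.1 ∂(ν.prod ν) := by
      rw [key]
      field_simp
    rw [h1, abs_mul, abs_of_nonneg (by positivity : (0:ℝ) ≤ c⁻¹)]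
    refine mul_le_mul_of_nonneg_left ?_ (by positivity)
    calc |∫ z : Z × Z, (φ z.1 - φ z.2) * f z.1 ∂(ν.prod ν)|
        ≤ ∫ z : Z × Z, ‖(φ z.1 - φ z.2) * f z.1‖ ∂(ν.prod ν) := by
          rw [← Real.norm_eq_abs]
          exact norm_integral_le_integral_norm _
      _ = ∫ z : Z × Z, ‖φ z.1 - φ z.2‖ * ‖f z.1‖ ∂(ν.prod ν) := by simp_rw [norm_mul]
      _ ≤ _ := holder
  have hGfactor : (∫ z : Z × Z, ‖f z.1‖ ^ p' ∂(ν.prod ν)) ^ (1 / p') =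
      c ^ (1 / p') * (eLpNorm f (ENNReal.ofReal p') ν).toReal := by
    rw [hGeq, Real.mul_rpow hc.le (integral_nonneg fun x => by positivity), hfnorm]
  have hcc : c ^ (1 / p) * c ^ (1 / p') = c := by
    rw [← Real.rpow_add hc, one_div, one_div, hpq.inv_add_inv_eq_one, Real.rpow_one]
  calc |∫ x, φ x * f x ∂ν|
      ≤ c⁻¹ * ((∫ z : Z × Z, ‖φ z.1 - φ z.2‖ ^ p ∂(ν.prod ν)) ^ (1 / p) *
          (∫ z : Z × Z, ‖f z.1‖ ^ p' ∂(ν.prod ν)) ^ (1 / p')) := habs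
    _ ≤ c⁻¹ * ((D ^ θ * c ^ (1 / p) * (E ^ (1 / p)).toReal) *
          (c ^ (1 / p') * (eLpNorm f (ENNReal.ofReal p') ν).toReal)) := by
        rw [hGfactor]
        refine mul_le_mul_of_nonneg_left ?_ (by positivity)
        refine mul_le_mul_of_nonneg_right hFle (by positivity)
    _ = D ^ θ * (E ^ (1 / p)).toReal * (eLpNorm f (ENNReal.ofReal p') ν).toReal := by
        have hrw : c⁻¹ * ((D ^ θ * c ^ (1 / p) * (E ^ (1 / p)).toReal) *
            (c ^ (1 / p') * (eLpNorm f (ENNReal.ofReal p') ν).toReal)) =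
            (c⁻¹ * (c ^ (1 / p) * c ^ (1 / p'))) *
              (D ^ θ * (E ^ (1 / p)).toReal * (eLpNorm f (ENNReal.ofReal p') ν).toReal) := by
          ring
        rw [hrw, hcc, inv_mul_cancel₀ hc.ne', one_mul]
end

section
/- Let (X,d) be a metric space and let μ be a doubling Borel measure on X with doubling constant C_d. Let u be locally integrable with respect to μ, and let M ≥ 0, γ > 0 and R₀ > 0 be such that for every x ∈ X and every 0 < r ≤ R₀ one has ⨍_{B(x,r)} |u − u_{B(x,r)}| dμ ≤ M r^γ, where u_B := ⨍_B u dμ denotes the μ-average over B. Then there exists a constant C > 0, depending only on C_d and γ, such that |u(x) − u(y)| ≤ C M d(x,y)^γ whenever x and y are μ-Lebesgue points of u with 0 < d(x,y) ≤ R₀/2. -/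
open MeasureTheory Metric Filter
open scoped ENNReal

private lemma avg_sub_const_le {X : Type} [MeasurableSpace X]
    (μ : Measure X) {s t : Set X} (hst : s ⊆ t)
    (hs : 0 < μ s) (ht : μ t < ⊤) (u : X → ℝ) (hu : IntegrableOn u t μ) (c : ℝ) :
    |(⨍ z in s, u z ∂μ) - c| ≤ ((μ t).toReal / (μ s).toReal) * ⨍ z in t, |u z - c| ∂μ := by
  have hsfin : μ s ≠ ⊤ := (lt_of_le_of_lt (measure_mono hst) ht).ne
  have hs0 : (0:ℝ) < (μ s).toReal := ENNReal.toReal_pos hs.ne' hsfin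
  have ht0 : (0:ℝ) < (μ t).toReal :=
    ENNReal.toReal_pos (lt_of_lt_of_le hs (measure_mono hst)).ne' ht.ne
  have hus : IntegrableOn u s μ := hu.mono_set hst
  have hcs : IntegrableOn (fun _ : X => c) s μ :=
    integrableOn_const (lt_of_le_of_lt (measure_mono hst) ht).ne
  have hct : IntegrableOn (fun _ : X => c) t μ := integrableOn_const ht.ne
  have habs : IntegrableOn (fun z => |u z - c|) t μ := (hu.sub hct).abs
  have key : (⨍ z in s, u z ∂μ) - c = (μ s).toReal⁻¹ * ∫ z in s, (u z - c) ∂μ := by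
    rw [setAverage_eq, integral_sub hus hcs, setIntegral_const, smul_eq_mul, smul_eq_mul,
      measureReal_def]
    field_simp
  rw [key, abs_mul, abs_of_nonneg (inv_nonneg.2 hs0.le)]
  have h1 : |∫ z in s, (u z - c) ∂μ| ≤ ∫ z in s, |u z - c| ∂μ := by
    simpa [Real.norm_eq_abs] using
      norm_integral_le_integral_norm (μ := μ.restrict s) (f := fun z => u z - c)
  have h2 : ∫ z in s, |u z - c| ∂μ ≤ ∫ z in t, |u z - c| ∂μ :=
    setIntegral_mono_set habs (Filter.Eventually.of_forall fun z => abs_nonneg _)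
      (HasSubset.Subset.eventuallyLE hst)
  have h3 : (μ s).toReal⁻¹ * |∫ z in s, (u z - c) ∂μ| ≤
      (μ s).toReal⁻¹ * ∫ z in t, |u z - c| ∂μ := by
    exact mul_le_mul_of_nonneg_left (h1.trans h2) (inv_nonneg.2 hs0.le)
  refine h3.trans (le_of_eq ?_)
  rw [setAverage_eq, smul_eq_mul, measureReal_def]
  field_simp

private lemma chain_lemma {X : Type} [MetricSpace X] [MeasurableSpace X] [BorelSpace X]
    (μ : Measure X) (C_d γ : ℝ) (hCd : 1 ≤ C_d) (hγ : 0 < γ)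
    (hpos : ∀ (x : X) (r : ℝ), 0 < r → 0 < μ (ball x r))
    (hfin : ∀ (x : X) (r : ℝ), 0 < r → μ (ball x r) < ⊤)
    (hdbl : ∀ (x : X) (r : ℝ), 0 < r → μ (ball x (2 * r)) ≤ ENNReal.ofReal C_d * μ (ball x r))
    (u : X → ℝ) (hint : ∀ (x : X) (r : ℝ), IntegrableOn u (ball x r) μ)
    (M R₀ : ℝ) (hM0 : 0 ≤ M)
    (hM : ∀ (x : X) (r : ℝ), 0 < r → r ≤ R₀ →
      ⨍ y in ball x r, |u y - ⨍ z in ball x r, u z ∂μ| ∂μ ≤ M * r ^ γ)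
    (x : X)
    (hx : Tendsto (fun r => ⨍ z in ball x r, |u z - u x| ∂μ)
      (nhdsWithin 0 (Set.Ioi 0)) (nhds 0))
    (r : ℝ) (hr : 0 < r) (hrR : r ≤ R₀) :
    |u x - ⨍ z in ball x r, u z ∂μ| ≤ (C_d / (1 - (2:ℝ)⁻¹ ^ γ)) * M * r ^ γ := by
  set q : ℝ := (2:ℝ)⁻¹ ^ γ with hq_def
  have hq0 : 0 < q := Real.rpow_pos_of_pos (by norm_num) γ
  have hq1 : q < 1 := Real.rpow_lt_one (by norm_num) (by norm_num) hγ
  have hCd0 : (0:ℝ) < C_d := lt_of_lt_of_le one_pos hCd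
  set rad : ℕ → ℝ := fun n => (2:ℝ)⁻¹ ^ n * r with hrad_def
  have hradpos : ∀ n, 0 < rad n := fun n => by positivity
  have hradle : ∀ n, rad n ≤ r := by
    intro n
    have h1 : (2:ℝ)⁻¹ ^ n ≤ 1 := pow_le_one₀ (by norm_num) (by norm_num)
    calc rad n = (2:ℝ)⁻¹ ^ n * r := rfl
      _ ≤ 1 * r := by nlinarith
      _ = r := one_mul r
  have hrad0 : rad 0 = r := by simp [hrad_def]
  have hradsucc : ∀ n, rad n = 2 * rad (n + 1) := by
    intro n; simp only [hrad_def, pow_succ]; ring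
  have hradrpow : ∀ n, rad n ^ γ = r ^ γ * q ^ n := by
    intro n
    have h1 : ((2:ℝ)⁻¹ ^ n) ^ γ = q ^ n := by
      rw [← Real.rpow_natCast (2:ℝ)⁻¹ n, ← Real.rpow_natCast q n, hq_def,
        ← Real.rpow_mul (by norm_num), ← Real.rpow_mul (by norm_num), mul_comm]
    rw [hrad_def]
    rw [Real.mul_rpow (by positivity) hr.le, h1, mul_comm]
  set a : ℕ → ℝ := fun n => ⨍ z in ball x (rad n), u z ∂μ with ha_def
  -- the step estimate
  have step : ∀ n, |a (n + 1) - a n| ≤ C_d * (M * rad n ^ γ) := by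
    intro n
    have hsub : ball x (rad (n + 1)) ⊆ ball x (rad n) :=
      ball_subset_ball (by rw [hradsucc n]; linarith [hradpos (n+1)])
    have hA := avg_sub_const_le μ hsub (hpos x _ (hradpos (n+1))) (hfin x _ (hradpos n))
      u (hint x _) (⨍ z in ball x (rad n), u z ∂μ)
    have hratio : (μ (ball x (rad n))).toReal / (μ (ball x (rad (n+1)))).toReal ≤ C_d := by
      have hs0 : (0:ℝ) < (μ (ball x (rad (n+1)))).toReal :=
        ENNReal.toReal_pos (hpos x _ (hradpos (n+1))).ne' (hfin x _ (hradpos (n+1))).ne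
      rw [div_le_iff₀ hs0]
      have hd := hdbl x (rad (n+1)) (hradpos (n+1))
      rw [← hradsucc n] at hd
      have := ENNReal.toReal_mono (a := μ (ball x (rad n)))
        (b := ENNReal.ofReal C_d * μ (ball x (rad (n+1))))
        (by
          exact ENNReal.mul_ne_top ENNReal.ofReal_ne_top (hfin x _ (hradpos (n+1))).ne) hd
      rwa [ENNReal.toReal_mul, ENNReal.toReal_ofReal hCd0.le] at this
    have havg : ⨍ z in ball x (rad n), |u z - ⨍ z in ball x (rad n), u z ∂μ| ∂μ ≤
        M * rad n ^ γ := hM x (rad n) (hradpos n) ((hradle n).trans hrR)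
    have havg0 : 0 ≤ ⨍ z in ball x (rad n), |u z - ⨍ z in ball x (rad n), u z ∂μ| ∂μ := by
      rw [setAverage_eq, smul_eq_mul]
      exact mul_nonneg (by positivity) (integral_nonneg fun z => abs_nonneg _)
    have hr0 : (0:ℝ) ≤ (μ (ball x (rad n))).toReal / (μ (ball x (rad (n+1)))).toReal := by
      positivity
    calc |a (n + 1) - a n| ≤
        ((μ (ball x (rad n))).toReal / (μ (ball x (rad (n+1)))).toReal) *
          ⨍ z in ball x (rad n), |u z - ⨍ z in ball x (rad n), u z ∂μ| ∂μ := hA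
      _ ≤ C_d * (M * rad n ^ γ) := mul_le_mul hratio havg havg0 hCd0.le
  -- telescoping
  have partial_bound : ∀ n, |a 0 - a n| ≤
      C_d * M * r ^ γ * ∑ i ∈ Finset.range n, q ^ i := by
    intro n
    induction n with
    | zero => simp
    | succ n ih =>
      have h1 : |a 0 - a (n + 1)| ≤ |a 0 - a n| + |a (n+1) - a n| := by
        rw [abs_sub_comm (a (n+1)) (a n)]
        exact (abs_sub_le (a 0) (a n) (a (n+1))).trans (le_refl _)
      have h2 := step n
      rw [hradrpow n] at h2
      rw [Finset.sum_range_succ]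
      calc |a 0 - a (n + 1)| ≤ |a 0 - a n| + |a (n+1) - a n| := h1
        _ ≤ C_d * M * r ^ γ * ∑ i ∈ Finset.range n, q ^ i +
            C_d * (M * (r ^ γ * q ^ n)) := add_le_add ih h2
        _ = C_d * M * r ^ γ * (∑ i ∈ Finset.range n, q ^ i + q ^ n) := by ring
  have geom : ∀ n, ∑ i ∈ Finset.range n, q ^ i ≤ (1 - q)⁻¹ := by
    intro n
    rw [geom_sum_eq hq1.ne n, ← neg_div_neg_eq, neg_sub, neg_sub, ← one_div]
    gcongr
    · exact sub_le_self 1 (pow_nonneg hq0.le n)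
  -- convergence a n → u x
  have htend_rad : Tendsto rad atTop (nhdsWithin 0 (Set.Ioi 0)) := by
    apply tendsto_nhdsWithin_of_tendsto_nhds_of_eventually_within
    · have := tendsto_pow_atTop_nhds_zero_of_lt_one (r := (2:ℝ)⁻¹) (by norm_num) (by norm_num)
      simpa [hrad_def] using this.mul_const r
    · exact Filter.Eventually.of_forall fun n => hradpos n
  have he : Tendsto (fun n => ⨍ z in ball x (rad n), |u z - u x| ∂μ) atTop (nhds 0) :=
    hx.comp htend_rad
  have hbound : ∀ n, |a n - u x| ≤ ⨍ z in ball x (rad n), |u z - u x| ∂μ := by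
    intro n
    have hA := avg_sub_const_le μ (subset_refl (ball x (rad n))) (hpos x _ (hradpos n))
      (hfin x _ (hradpos n)) u (hint x _) (u x)
    rwa [div_self (ENNReal.toReal_pos (hpos x _ (hradpos n)).ne'
      (hfin x _ (hradpos n)).ne).ne', one_mul] at hA
  have ha_tend : Tendsto a atTop (nhds (u x)) := by
    rw [tendsto_iff_norm_sub_tendsto_zero]
    exact squeeze_zero (fun n => norm_nonneg _)
      (fun n => by simpa [Real.norm_eq_abs] using hbound n) he
  have hlim : Tendsto (fun n => |a 0 - a n|) atTop (nhds (|a 0 - u x|)) :=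
    ((tendsto_const_nhds.sub ha_tend).abs)
  have hfinal : |a 0 - u x| ≤ C_d * M * r ^ γ * (1 - q)⁻¹ := by
    refine le_of_tendsto hlim (Filter.Eventually.of_forall fun n => ?_)
    refine (partial_bound n).trans ?_
    exact mul_le_mul_of_nonneg_left (geom n) (by positivity)
  have ha0 : a 0 = ⨍ z in ball x r, u z ∂μ := by simp only [ha_def, hrad0]
  rw [abs_sub_comm, ← ha0]
  calc |a 0 - u x| ≤ C_d * M * r ^ γ * (1 - q)⁻¹ := hfinal
    _ = C_d / (1 - q) * M * r ^ γ := by ring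

/-- Morrey–Campanato estimate: if `μ` is a doubling measure with doubling constant `C_d`
and `u` is locally integrable with `⨍_{B(x,r)} |u − u_{B(x,r)}| dμ ≤ M r^γ` for all
`0 < r ≤ R₀`, then there is `C > 0` depending only on `C_d` and `γ` such that
`|u(x) − u(y)| ≤ C M d(x,y)^γ` at Lebesgue points `x, y` with `0 < d(x,y) ≤ R₀/2`. -/
theorem campanato_holder (C_d γ : ℝ) (hCd : 1 ≤ C_d) (hγ : 0 < γ) :
    ∃ C : ℝ, 0 < C ∧
      ∀ (X : Type) [MetricSpace X] [MeasurableSpace X] [BorelSpace X]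
        (μ : Measure X),
        (∀ (x : X) (r : ℝ), 0 < r → 0 < μ (ball x r)) →
        (∀ (x : X) (r : ℝ), 0 < r → μ (ball x r) < ⊤) →
        (∀ (x : X) (r : ℝ), 0 < r → μ (ball x (2 * r)) ≤ ENNReal.ofReal C_d * μ (ball x r)) →
        ∀ (u : X → ℝ), (∀ (x : X) (r : ℝ), IntegrableOn u (ball x r) μ) →
        ∀ (M R₀ : ℝ), 0 ≤ M → 0 < R₀ →
        (∀ (x : X) (r : ℝ), 0 < r → r ≤ R₀ →
          ⨍ y in ball x r, |u y - ⨍ z in ball x r, u z ∂μ| ∂μ ≤ M * r ^ γ) →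
        ∀ x y : X,
          Tendsto (fun r => ⨍ z in ball x r, |u z - u x| ∂μ)
            (nhdsWithin 0 (Set.Ioi 0)) (nhds 0) →
          Tendsto (fun r => ⨍ z in ball y r, |u z - u y| ∂μ)
            (nhdsWithin 0 (Set.Ioi 0)) (nhds 0) →
          0 < dist x y → dist x y ≤ R₀ / 2 →
          |u x - u y| ≤ C * M * dist x y ^ γ := by
  have hCd0 : (0:ℝ) < C_d := lt_of_lt_of_le one_pos hCd
  set q : ℝ := (2:ℝ)⁻¹ ^ γ with hq_def
  have hq0 : 0 < q := Real.rpow_pos_of_pos (by norm_num) γ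
  have hq1 : q < 1 := Real.rpow_lt_one (by norm_num) (by norm_num) hγ
  set tp : ℝ := (2:ℝ) ^ γ with htp_def
  have htp0 : 0 < tp := Real.rpow_pos_of_pos (by norm_num) γ
  set K : ℝ := C_d / (1 - q) with hK_def
  have hK0 : 0 < K := div_pos hCd0 (by linarith)
  refine ⟨(1 + tp) * K + C_d ^ 2 * tp, by positivity, ?_⟩
  intro X _ _ _ μ hpos hfin hdbl u hint M R₀ hM0 hR₀ hM x y hx hy hdist hdistR
  set r : ℝ := dist x y with hr_def
  have hr2 : 2 * r ≤ R₀ := by linarith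
  have hrR : r ≤ R₀ := by linarith
  -- chain at x
  have A1 := chain_lemma μ C_d γ hCd hγ hpos hfin hdbl u hint M R₀ hM0 hM x hx r hdist hrR
  -- chain at y with radius 2r
  have A2 := chain_lemma μ C_d γ hCd hγ hpos hfin hdbl u hint M R₀ hM0 hM y hy (2 * r)
    (by linarith) hr2
  -- middle estimate
  have hsub1 : ball x r ⊆ ball y (2 * r) := by
    apply ball_subset_ball'
    rw [← hr_def]; linarith
  have hsub2 : ball y (2 * r) ⊆ ball x (2 * (2 * r)) := by
    apply ball_subset_ball'
    rw [dist_comm, ← hr_def]; linarith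
  have A3 : |(⨍ z in ball x r, u z ∂μ) - ⨍ z in ball y (2 * r), u z ∂μ| ≤
      C_d ^ 2 * (M * (2 * r) ^ γ) := by
    have hA := avg_sub_const_le μ hsub1 (hpos x r hdist) (hfin y (2*r) (by linarith))
      u (hint y (2*r)) (⨍ z in ball y (2 * r), u z ∂μ)
    have hratio : (μ (ball y (2*r))).toReal / (μ (ball x r)).toReal ≤ C_d ^ 2 := by
      have hs0 : (0:ℝ) < (μ (ball x r)).toReal :=
        ENNReal.toReal_pos (hpos x r hdist).ne' (hfin x r hdist).ne
      rw [div_le_iff₀ hs0]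
      have h1 : μ (ball y (2*r)) ≤ μ (ball x (2 * (2 * r))) := measure_mono hsub2
      have h2 := hdbl x (2*r) (by linarith)
      have h3 := hdbl x r hdist
      have h4 : μ (ball y (2*r)) ≤
          ENNReal.ofReal C_d * (ENNReal.ofReal C_d * μ (ball x r)) :=
        h1.trans (h2.trans (mul_le_mul_right h3 _))
      have h5 := ENNReal.toReal_mono (a := μ (ball y (2*r)))
        (b := ENNReal.ofReal C_d * (ENNReal.ofReal C_d * μ (ball x r)))
        (ENNReal.mul_ne_top ENNReal.ofReal_ne_top
          (ENNReal.mul_ne_top ENNReal.ofReal_ne_top (hfin x r hdist).ne)) h4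
      rw [ENNReal.toReal_mul, ENNReal.toReal_mul, ENNReal.toReal_ofReal hCd0.le] at h5
      calc (μ (ball y (2*r))).toReal ≤ C_d * (C_d * (μ (ball x r)).toReal) := h5
        _ = C_d ^ 2 * (μ (ball x r)).toReal := by ring
    have havg : ⨍ z in ball y (2*r), |u z - ⨍ z in ball y (2*r), u z ∂μ| ∂μ ≤
        M * (2 * r) ^ γ := hM y (2*r) (by linarith) hr2
    have havg0 : 0 ≤ ⨍ z in ball y (2*r), |u z - ⨍ z in ball y (2*r), u z ∂μ| ∂μ := by
      rw [setAverage_eq, smul_eq_mul]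
      exact mul_nonneg (by positivity) (integral_nonneg fun z => abs_nonneg _)
    calc |(⨍ z in ball x r, u z ∂μ) - ⨍ z in ball y (2 * r), u z ∂μ| ≤
        ((μ (ball y (2*r))).toReal / (μ (ball x r)).toReal) *
          ⨍ z in ball y (2*r), |u z - ⨍ z in ball y (2*r), u z ∂μ| ∂μ := hA
      _ ≤ C_d ^ 2 * (M * (2 * r) ^ γ) := mul_le_mul hratio havg havg0 (by positivity)
  have hexp : (2 * r) ^ γ = tp * r ^ γ := by
    rw [Real.mul_rpow (by norm_num) hdist.le]
  rw [hexp] at A2 A3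
  have htri : |u x - u y| ≤ |u x - ⨍ z in ball x r, u z ∂μ| +
      |(⨍ z in ball x r, u z ∂μ) - ⨍ z in ball y (2 * r), u z ∂μ| +
      |u y - ⨍ z in ball y (2 * r), u z ∂μ| := by
    have t1 := abs_sub_le (u x) (⨍ z in ball x r, u z ∂μ) (u y)
    have t2 := abs_sub_le (⨍ z in ball x r, u z ∂μ) (⨍ z in ball y (2 * r), u z ∂μ) (u y)
    rw [abs_sub_comm (⨍ z in ball y (2 * r), u z ∂μ) (u y)] at t2
    linarith
  have hrγ : (0:ℝ) < r ^ γ := Real.rpow_pos_of_pos hdist γ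
  rw [← hq_def, ← hK_def] at A1 A2
  have hgoal : ((1 + tp) * K + C_d ^ 2 * tp) * M * r ^ γ =
      K * M * r ^ γ + C_d ^ 2 * (M * (tp * r ^ γ)) + K * M * (tp * r ^ γ) := by ring
  linarith
end

section
/- Let p > 1, let α, β ∈ (0,1), let C > 0, and let σ, τ > 0 satisfy σα ≥ α + 1, σα + τ/p ≥ α + 1 + σ, σ + τβ ≥ β + 1 + τ, and τβ + τ/p ≥ β + 1 + τ. Let U > 0 and Ψ > 0, and suppose that for every d > 0 we are given sequences (u_n^{(d)})_{n≥0} and (ψ_n^{(d)})_{n≥0} of nonnegative real numbers with u_0^{(d)} ≤ U and ψ_0^{(d)} ≤ Ψ, satisfying for every n ≥ 0 the recursive inequalities u_{n+1}^{(d)} ≤ C · 2^{n(α+1)} · d^{−α} · (u_n^{(d)})^α · (u_n^{(d)} + (ψ_n^{(d)})^{1/p}) and ψ_{n+1}^{(d)} ≤ C · 2^{n(β+1)} · d^{−β} · (ψ_n^{(d)})^β · (u_n^{(d)} + (ψ_n^{(d)})^{1/p}). Then there exists d > 0 such that u_n^{(d)} ≤ 2^{−σn} U and ψ_n^{(d)}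 ≤ 2^{−τn} Ψ for every n ≥ 0; in particular u_n^{(d)} → 0 and ψ_n^{(d)} → 0 as n → ∞. -/
open Filter

private lemma dg_two_rpow_add (x y : ℝ) : (2:ℝ) ^ x * (2:ℝ) ^ y = (2:ℝ) ^ (x + y) :=
  (Real.rpow_add two_pos x y).symm

private lemma dg_scalar (s P T D : ℝ) (hD : 0 < D)
    (hK : (2:ℝ) ^ (s+1) * P ≤ T * D) : P / D ≤ (2:ℝ) ^ (-s-1) * T := by
  rw [div_le_iff₀ hD]
  have h12 : (2:ℝ)^(-s-1) * (2:ℝ)^(s+1) = 1 := by rw [dg_two_rpow_add]; norm_num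
  calc P = (2:ℝ)^(-s-1) * ((2:ℝ)^(s+1) * P) := by rw [← mul_assoc, h12, one_mul]
    _ ≤ (2:ℝ)^(-s-1) * (T * D) :=
        mul_le_mul_of_nonneg_left hK (Real.rpow_pos_of_pos two_pos _).le
    _ = (2:ℝ)^(-s-1) * T * D := by ring

private lemma dg_step (q T P1 P2 e1 e2 M : ℝ)
    (h1 : 0 ≤ P1) (h2 : 0 ≤ P2)
    (he1 : e1 ≤ -q*M) (he2 : e2 ≤ -q*M)
    (hb1 : P1 ≤ (2:ℝ)^(-q-1)*T) (hb2 : P2 ≤ (2:ℝ)^(-q-1)*T) :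
    P1 * (2:ℝ)^e1 + P2 * (2:ℝ)^e2 ≤ (2:ℝ)^(-q*(M+1))*T := by
  have hT : 0 ≤ (2:ℝ)^(-q-1)*T := le_trans h1 hb1
  have g1 : (2:ℝ)^e1 ≤ (2:ℝ)^(-q*M) := Real.rpow_le_rpow_of_exponent_le one_le_two he1
  have g2 : (2:ℝ)^e2 ≤ (2:ℝ)^(-q*M) := Real.rpow_le_rpow_of_exponent_le one_le_two he2
  have t1 : P1 * (2:ℝ)^e1 ≤ ((2:ℝ)^(-q-1)*T) * (2:ℝ)^(-q*M) :=
    mul_le_mul hb1 g1 (Real.rpow_pos_of_pos two_pos _).le hT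
  have t2 : P2 * (2:ℝ)^e2 ≤ ((2:ℝ)^(-q-1)*T) * (2:ℝ)^(-q*M) :=
    mul_le_mul hb2 g2 (Real.rpow_pos_of_pos two_pos _).le hT
  have hsum : ((2:ℝ)^(-q-1)*T) * (2:ℝ)^(-q*M) + ((2:ℝ)^(-q-1)*T) * (2:ℝ)^(-q*M)
      = (2:ℝ)^(-q*(M+1))*T := by
    have h1' : ((2:ℝ)^(-q-1)*T) * (2:ℝ)^(-q*M) + ((2:ℝ)^(-q-1)*T) * (2:ℝ)^(-q*M)
        = ((2:ℝ)^(1:ℝ) * ((2:ℝ)^(-q-1) * (2:ℝ)^(-q*M))) * T := by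
      rw [Real.rpow_one]; ring
    rw [h1', dg_two_rpow_add, dg_two_rpow_add]
    congr 2
    ring
  linarith

set_option maxHeartbeats 1000000 in
/-- The De Giorgi-type iteration lemma underlying the boundedness of solutions to the
Neumann problem: under the stated exponent conditions on `σ, τ`, there is a choice of
`d > 0` for which the recursively controlled sequences `u_n^{(d)}, ψ_n^{(d)}` decay
geometrically, in particular they tend to `0`. -/
theorem de_giorgi_iteration
    (p α β C σ τ : ℝ) (hp : 1 < p)
    (hα : α ∈ Set.Ioo (0 : ℝ) 1) (hβ : β ∈ Set.Ioo (0 : ℝ) 1)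
    (hC : 0 < C) (hσ : 0 < σ) (hτ : 0 < τ)
    (h1 : σ * α ≥ α + 1)
    (h2 : σ * α + τ / p ≥ α + 1 + σ)
    (h3 : σ + τ * β ≥ β + 1 + τ)
    (h4 : τ * β + τ / p ≥ β + 1 + τ)
    (U Ψ : ℝ) (hU : 0 < U) (hΨ : 0 < Ψ)
    (u ψ : ℝ → ℕ → ℝ)
    (hu_nonneg : ∀ d, 0 < d → ∀ n, 0 ≤ u d n)
    (hψ_nonneg : ∀ d, 0 < d → ∀ n, 0 ≤ ψ d n)
    (hu0 : ∀ d, 0 < d → u d 0 ≤ U)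
    (hψ0 : ∀ d, 0 < d → ψ d 0 ≤ Ψ)
    (hrec_u : ∀ d, 0 < d → ∀ n : ℕ,
      u d (n + 1) ≤ C * 2 ^ ((n : ℝ) * (α + 1)) * d ^ (-α) * (u d n) ^ α *
        (u d n + (ψ d n) ^ (1 / p)))
    (hrec_ψ : ∀ d, 0 < d → ∀ n : ℕ,
      ψ d (n + 1) ≤ C * 2 ^ ((n : ℝ) * (β + 1)) * d ^ (-β) * (ψ d n) ^ β *
        (u d n + (ψ d n) ^ (1 / p))) :
    ∃ d : ℝ, 0 < d ∧
      (∀ n : ℕ, u d n ≤ 2 ^ (-σ * (n : ℝ)) * U ∧ ψ d n ≤ 2 ^ (-τ * (n : ℝ)) * Ψ) ∧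
      Tendsto (u d) atTop (nhds 0) ∧ Tendsto (ψ d) atTop (nhds 0) := by
  obtain ⟨hα0, hα1⟩ := hα
  obtain ⟨hβ0, hβ1⟩ := hβ
  have hp0 : (0:ℝ) < p := lt_trans one_pos hp
  have hUα : (0:ℝ) < U ^ α := Real.rpow_pos_of_pos hU _
  have hΨβ : (0:ℝ) < Ψ ^ β := Real.rpow_pos_of_pos hΨ _
  have hΨp : (0:ℝ) < Ψ ^ (1/p) := Real.rpow_pos_of_pos hΨ _
  set A := max 1 (max
      (max ((2:ℝ)^(σ+1)*C*U^α) ((2:ℝ)^(σ+1)*C*U^α*Ψ^(1/p)/U))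
      (max ((2:ℝ)^(τ+1)*C*Ψ^β*U/Ψ) ((2:ℝ)^(τ+1)*C*Ψ^β*Ψ^(1/p)/Ψ))) with hA_def
  have hA1 : (1:ℝ) ≤ A := le_max_left _ _
  have hA0 : (0:ℝ) < A := lt_of_lt_of_le one_pos hA1
  set m := min α β with hm_def
  have hm0 : 0 < m := lt_min hα0 hβ0
  set d := A ^ m⁻¹ with hd_def
  have hd : 0 < d := Real.rpow_pos_of_pos hA0 _
  have hd1 : 1 ≤ d := by
    rw [hd_def, show (1:ℝ) = (1:ℝ)^(m⁻¹) from (Real.one_rpow _).symm]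
    exact Real.rpow_le_rpow zero_le_one hA1 (inv_nonneg.mpr hm0.le)
  have hdm : d ^ m = A := by
    rw [hd_def, ← Real.rpow_mul hA0.le, inv_mul_cancel₀ hm0.ne', Real.rpow_one]
  have hdα : A ≤ d ^ α := by
    rw [← hdm]; exact Real.rpow_le_rpow_of_exponent_le hd1 (min_le_left _ _)
  have hdβ : A ≤ d ^ β := by
    rw [← hdm]; exact Real.rpow_le_rpow_of_exponent_le hd1 (min_le_right _ _)
  have hK1A : (2:ℝ)^(σ+1)*C*U^α ≤ A :=
    le_trans (le_trans (le_max_left _ _) (le_max_left _ _)) (le_max_right _ _)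
  have hK2A : (2:ℝ)^(σ+1)*C*U^α*Ψ^(1/p)/U ≤ A :=
    le_trans (le_trans (le_max_right _ _) (le_max_left _ _)) (le_max_right _ _)
  have hK3A : (2:ℝ)^(τ+1)*C*Ψ^β*U/Ψ ≤ A :=
    le_trans (le_trans (le_max_left _ _) (le_max_right _ _)) (le_max_right _ _)
  have hK4A : (2:ℝ)^(τ+1)*C*Ψ^β*Ψ^(1/p)/Ψ ≤ A :=
    le_trans (le_trans (le_max_right _ _) (le_max_right _ _)) (le_max_right _ _)
  clear_value A m d
  have hdα0 : 0 < d ^ α := Real.rpow_pos_of_pos hd _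
  have hdβ0 : 0 < d ^ β := Real.rpow_pos_of_pos hd _
  -- the four scalar bounds
  have hb1u : C*d^(-α)*U^α*U ≤ (2:ℝ)^(-σ-1)*U := by
    have hA' : (2:ℝ)^(σ+1)*C*U^α ≤ d ^ α := le_trans hK1A hdα
    have hK : (2:ℝ)^(σ+1) * (C*U^α*U) ≤ U * d^α := by
      calc (2:ℝ)^(σ+1) * (C*U^α*U) = ((2:ℝ)^(σ+1)*C*U^α)*U := by ring
        _ ≤ d^α * U := mul_le_mul_of_nonneg_right hA' hU.le
        _ = U * d^α := mul_comm _ _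
    calc C*d^(-α)*U^α*U = (C*U^α*U)/(d^α) := by
          rw [Real.rpow_neg hd.le]; ring
      _ ≤ (2:ℝ)^(-σ-1)*U := dg_scalar σ _ U _ hdα0 hK
  have hb2u : C*d^(-α)*U^α*Ψ^(1/p) ≤ (2:ℝ)^(-σ-1)*U := by
    have hA' : (2:ℝ)^(σ+1)*C*U^α*Ψ^(1/p)/U ≤ d ^ α := le_trans hK2A hdα
    rw [div_le_iff₀ hU] at hA'
    have hK : (2:ℝ)^(σ+1) * (C*U^α*Ψ^(1/p)) ≤ U * d^α := by
      calc (2:ℝ)^(σ+1) * (C*U^α*Ψ^(1/p)) = (2:ℝ)^(σ+1)*C*U^α*Ψ^(1/p) := by ring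
        _ ≤ d^α * U := hA'
        _ = U * d^α := mul_comm _ _
    calc C*d^(-α)*U^α*Ψ^(1/p) = (C*U^α*Ψ^(1/p))/(d^α) := by
          rw [Real.rpow_neg hd.le]; ring
      _ ≤ (2:ℝ)^(-σ-1)*U := dg_scalar σ _ U _ hdα0 hK
  have hb1ψ : C*d^(-β)*Ψ^β*U ≤ (2:ℝ)^(-τ-1)*Ψ := by
    have hA' : (2:ℝ)^(τ+1)*C*Ψ^β*U/Ψ ≤ d ^ β := le_trans hK3A hdβ
    rw [div_le_iff₀ hΨ] at hA'
    have hK : (2:ℝ)^(τ+1) * (C*Ψ^β*U) ≤ Ψ * d^β := by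
      calc (2:ℝ)^(τ+1) * (C*Ψ^β*U) = (2:ℝ)^(τ+1)*C*Ψ^β*U := by ring
        _ ≤ d^β * Ψ := hA'
        _ = Ψ * d^β := mul_comm _ _
    calc C*d^(-β)*Ψ^β*U = (C*Ψ^β*U)/(d^β) := by
          rw [Real.rpow_neg hd.le]; ring
      _ ≤ (2:ℝ)^(-τ-1)*Ψ := dg_scalar τ _ Ψ _ hdβ0 hK
  have hb2ψ : C*d^(-β)*Ψ^β*Ψ^(1/p) ≤ (2:ℝ)^(-τ-1)*Ψ := by
    have hA' : (2:ℝ)^(τ+1)*C*Ψ^β*Ψ^(1/p)/Ψ ≤ d ^ β := le_trans hK4A hdβ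
    rw [div_le_iff₀ hΨ] at hA'
    have hK : (2:ℝ)^(τ+1) * (C*Ψ^β*Ψ^(1/p)) ≤ Ψ * d^β := by
      calc (2:ℝ)^(τ+1) * (C*Ψ^β*Ψ^(1/p)) = (2:ℝ)^(τ+1)*C*Ψ^β*Ψ^(1/p) := by ring
        _ ≤ d^β * Ψ := hA'
        _ = Ψ * d^β := mul_comm _ _
    calc C*d^(-β)*Ψ^β*Ψ^(1/p) = (C*Ψ^β*Ψ^(1/p))/(d^β) := by
          rw [Real.rpow_neg hd.le]; ring
      _ ≤ (2:ℝ)^(-τ-1)*Ψ := dg_scalar τ _ Ψ _ hdβ0 hK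
  -- the main inductive claim
  have main : ∀ n : ℕ, u d n ≤ 2 ^ (-σ * (n : ℝ)) * U ∧ ψ d n ≤ 2 ^ (-τ * (n : ℝ)) * Ψ := by
    intro n
    induction n with
    | zero =>
        simp only [Nat.cast_zero, mul_zero, neg_zero, Real.rpow_zero, one_mul]
        exact ⟨hu0 d hd, hψ0 d hd⟩
    | succ n ih =>
        obtain ⟨ihu, ihψ⟩ := ih
        have hN0 : (0:ℝ) ≤ (n:ℝ) := Nat.cast_nonneg n
        have hun := hu_nonneg d hd n
        have hψn := hψ_nonneg d hd n
        have hXα : ((2:ℝ)^(-σ*(n:ℝ))*U)^α = (2:ℝ)^(-σ*(n:ℝ)*α) * U^α := by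
          rw [Real.mul_rpow (Real.rpow_pos_of_pos two_pos _).le hU.le,
            ← Real.rpow_mul (by norm_num : (0:ℝ) ≤ 2)]
        have hYβ : ((2:ℝ)^(-τ*(n:ℝ))*Ψ)^β = (2:ℝ)^(-τ*(n:ℝ)*β) * Ψ^β := by
          rw [Real.mul_rpow (Real.rpow_pos_of_pos two_pos _).le hΨ.le,
            ← Real.rpow_mul (by norm_num : (0:ℝ) ≤ 2)]
        have hYp : ((2:ℝ)^(-τ*(n:ℝ))*Ψ)^(1/p) = (2:ℝ)^(-τ*(n:ℝ)*(1/p)) * Ψ^(1/p) := by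
          rw [Real.mul_rpow (Real.rpow_pos_of_pos two_pos _).le hΨ.le,
            ← Real.rpow_mul (by norm_num : (0:ℝ) ≤ 2)]
        constructor
        · push_cast
          calc u d (n+1)
              ≤ C * 2^((n:ℝ)*(α+1)) * d^(-α) * ((2:ℝ)^(-σ*(n:ℝ))*U)^α *
                ((2:ℝ)^(-σ*(n:ℝ))*U + ((2:ℝ)^(-τ*(n:ℝ))*Ψ)^(1/p)) := by
                refine le_trans (hrec_u d hd n) ?_
                gcongr <;> first | exact ihu | exact ihψ
            _ = C * 2^((n:ℝ)*(α+1)) * d^(-α) * ((2:ℝ)^(-σ*(n:ℝ)*α) * U^α) *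
                ((2:ℝ)^(-σ*(n:ℝ))*U + (2:ℝ)^(-τ*(n:ℝ)*(1/p)) * Ψ^(1/p)) := by
                rw [hXα, hYp]
            _ = (C*d^(-α)*U^α*U) *
                  ((2:ℝ)^((n:ℝ)*(α+1)) * (2:ℝ)^(-σ*(n:ℝ)*α) * (2:ℝ)^(-σ*(n:ℝ)))
                + (C*d^(-α)*U^α*Ψ^(1/p)) *
                  ((2:ℝ)^((n:ℝ)*(α+1)) * (2:ℝ)^(-σ*(n:ℝ)*α) * (2:ℝ)^(-τ*(n:ℝ)*(1/p))) := by
                ring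
            _ = (C*d^(-α)*U^α*U) * (2:ℝ)^((n:ℝ)*(α+1) + -σ*(n:ℝ)*α + -σ*(n:ℝ))
                + (C*d^(-α)*U^α*Ψ^(1/p)) *
                  (2:ℝ)^((n:ℝ)*(α+1) + -σ*(n:ℝ)*α + -τ*(n:ℝ)*(1/p)) := by
                simp only [dg_two_rpow_add]
            _ ≤ (2:ℝ)^(-σ*((n:ℝ)+1))*U := by
                refine dg_step σ U _ _ _ _ (n:ℝ) (by positivity) (by positivity) ?_ ?_ hb1u hb2u
                · have h := mul_le_mul_of_nonneg_left h1 hN0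
                  have key : (n:ℝ)*(α+1) + -σ*(n:ℝ)*α + -σ*(n:ℝ) - (-σ*(n:ℝ))
                      = (n:ℝ)*(α+1) - (n:ℝ)*(σ*α) := by ring
                  linarith [key, h]
                · have h := mul_le_mul_of_nonneg_left h2 hN0
                  have key : (n:ℝ)*(α+1) + -σ*(n:ℝ)*α + -τ*(n:ℝ)*(1/p) - (-σ*(n:ℝ))
                      = (n:ℝ)*(α+1+σ) - (n:ℝ)*(σ*α+τ/p) := by ring
                  linarith [key, h]
        · push_cast
          calc ψ d (n+1)
              ≤ C * 2^((n:ℝ)*(β+1)) * d^(-β) * ((2:ℝ)^(-τ*(n:ℝ))*Ψ)^β *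
                ((2:ℝ)^(-σ*(n:ℝ))*U + ((2:ℝ)^(-τ*(n:ℝ))*Ψ)^(1/p)) := by
                refine le_trans (hrec_ψ d hd n) ?_
                gcongr <;> first | exact ihu | exact ihψ
            _ = C * 2^((n:ℝ)*(β+1)) * d^(-β) * ((2:ℝ)^(-τ*(n:ℝ)*β) * Ψ^β) *
                ((2:ℝ)^(-σ*(n:ℝ))*U + (2:ℝ)^(-τ*(n:ℝ)*(1/p)) * Ψ^(1/p)) := by
                rw [hYβ, hYp]
            _ = (C*d^(-β)*Ψ^β*U) *
                  ((2:ℝ)^((n:ℝ)*(β+1)) * (2:ℝ)^(-τ*(n:ℝ)*β) * (2:ℝ)^(-σ*(n:ℝ)))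
                + (C*d^(-β)*Ψ^β*Ψ^(1/p)) *
                  ((2:ℝ)^((n:ℝ)*(β+1)) * (2:ℝ)^(-τ*(n:ℝ)*β) * (2:ℝ)^(-τ*(n:ℝ)*(1/p))) := by
                ring
            _ = (C*d^(-β)*Ψ^β*U) * (2:ℝ)^((n:ℝ)*(β+1) + -τ*(n:ℝ)*β + -σ*(n:ℝ))
                + (C*d^(-β)*Ψ^β*Ψ^(1/p)) *
                  (2:ℝ)^((n:ℝ)*(β+1) + -τ*(n:ℝ)*β + -τ*(n:ℝ)*(1/p)) := by
                simp only [dg_two_rpow_add]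
            _ ≤ (2:ℝ)^(-τ*((n:ℝ)+1))*Ψ := by
                refine dg_step τ Ψ _ _ _ _ (n:ℝ) (by positivity) (by positivity) ?_ ?_ hb1ψ hb2ψ
                · have h := mul_le_mul_of_nonneg_left h3 hN0
                  have key : (n:ℝ)*(β+1) + -τ*(n:ℝ)*β + -σ*(n:ℝ) - (-τ*(n:ℝ))
                      = (n:ℝ)*(β+1+τ) - (n:ℝ)*(σ+τ*β) := by ring
                  linarith [key, h]
                · have h := mul_le_mul_of_nonneg_left h4 hN0
                  have key : (n:ℝ)*(β+1) + -τ*(n:ℝ)*β + -τ*(n:ℝ)*(1/p) - (-τ*(n:ℝ))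
                      = (n:ℝ)*(β+1+τ) - (n:ℝ)*(τ*β+τ/p) := by ring
                  linarith [key, h]
  -- the limits
  have tend_aux : ∀ q : ℝ, 0 < q →
      Tendsto (fun n : ℕ => (2:ℝ) ^ (-q * (n:ℝ))) atTop (nhds 0) := by
    intro q hq
    have h2 : (2:ℝ)^(-q) < 1 :=
      Real.rpow_lt_one_of_one_lt_of_neg one_lt_two (neg_lt_zero.mpr hq)
    have h3 : (0:ℝ) ≤ (2:ℝ)^(-q) := (Real.rpow_pos_of_pos two_pos _).le
    have ht := tendsto_pow_atTop_nhds_zero_of_lt_one h3 h2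
    refine ht.congr fun n => ?_
    rw [← Real.rpow_natCast ((2:ℝ)^(-q)) n, ← Real.rpow_mul (by norm_num : (0:ℝ) ≤ 2)]
  have tu : Tendsto (u d) atTop (nhds 0) := by
    have hg : Tendsto (fun n : ℕ => (2:ℝ)^(-σ*(n:ℝ))*U) atTop (nhds 0) := by
      have := (tend_aux σ hσ).mul_const U
      rwa [zero_mul] at this
    exact squeeze_zero (fun n => hu_nonneg d hd n) (fun n => (main n).1) hg
  have tψ : Tendsto (ψ d) atTop (nhds 0) := by
    have hg : Tendsto (fun n : ℕ => (2:ℝ)^(-τ*(n:ℝ))*Ψ) atTop (nhds 0) := by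
      have := (tend_aux τ hτ).mul_const Ψ
      rwa [zero_mul] at this
    exact squeeze_zero (fun n => hψ_nonneg d hd n) (fun n => (main n).2) hg
  exact ⟨d, hd, main, tu, tψ⟩
end

section
/- Let H be a real inner product space and let p ≥ 2. Then there exists a constant c_p > 0, depending only on p, such that for all ξ, η ∈ H one has ⟨‖ξ‖^{p−2} ξ − ‖η‖^{p−2} η, ξ − η⟩ ≥ c_p ‖ξ − η‖^p. -/
open scoped RealInnerProductSpace

/-- Structural monotonicity of the `p`-Laplace vector field for `p ≥ 2`: there is a
constant `c_p > 0`, depending only on `p`, such that in every real inner product space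
`⟨‖ξ‖^{p−2} ξ − ‖η‖^{p−2} η, ξ − η⟩ ≥ c_p ‖ξ − η‖^p`. -/
theorem pLaplace_monotonicity_ge_two (p : ℝ) (hp : 2 ≤ p) :
    ∃ c : ℝ, 0 < c ∧
      ∀ (H : Type) [NormedAddCommGroup H] [InnerProductSpace ℝ H] (ξ η : H),
        ⟪(‖ξ‖ ^ (p - 2)) • ξ - (‖η‖ ^ (p - 2)) • η, ξ - η⟫ ≥ c * ‖ξ - η‖ ^ p := by
  refine ⟨(2:ℝ) ^ (1 - p), Real.rpow_pos_of_pos two_pos _, ?_⟩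
  intro H _ _ ξ η
  by_cases hne : ξ = η
  · subst hne
    simp [Real.zero_rpow (by linarith : p ≠ 0)]
  set a := ‖ξ‖ ^ (p - 2) with ha
  set b := ‖η‖ ^ (p - 2) with hb
  have hd : 0 < ‖ξ - η‖ := norm_sub_pos_iff.mpr hne
  set d := ‖ξ - η‖ with hdd
  have hanon : 0 ≤ a := Real.rpow_nonneg (norm_nonneg _) _
  have hbnon : 0 ≤ b := Real.rpow_nonneg (norm_nonneg _) _
  have e1 : ⟪a • ξ - b • η, ξ - η⟫ = a * ⟪ξ, ξ⟫ + b * ⟪η, η⟫ - (a + b) * ⟪ξ, η⟫ := by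
    simp [inner_sub_left, inner_sub_right, real_inner_smul_left, real_inner_comm η ξ]
    ring
  have e2 : d ^ (2:ℕ) = ⟪ξ, ξ⟫ - 2 * ⟪ξ, η⟫ + ⟪η, η⟫ := by
    rw [hdd, @norm_sub_sq_real, real_inner_self_eq_norm_sq, real_inner_self_eq_norm_sq]
  have hab : 0 ≤ (a - b) * (⟪ξ, ξ⟫ - ⟪η, η⟫) := by
    rcases le_total ‖ξ‖ ‖η‖ with h | h
    · have h1 : a ≤ b := Real.rpow_le_rpow (norm_nonneg _) h (by linarith)
      have h2 : ⟪ξ, ξ⟫ ≤ ⟪η, η⟫ := by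
        rw [real_inner_self_eq_norm_sq, real_inner_self_eq_norm_sq]
        exact pow_le_pow_left₀ (norm_nonneg _) h 2
      nlinarith
    · have h1 : b ≤ a := Real.rpow_le_rpow (norm_nonneg _) h (by linarith)
      have h2 : ⟪η, η⟫ ≤ ⟪ξ, ξ⟫ := by
        rw [real_inner_self_eq_norm_sq, real_inner_self_eq_norm_sq]
        exact pow_le_pow_left₀ (norm_nonneg _) h 2
      exact mul_nonneg (by linarith) (by linarith)
  have step3 : ⟪a • ξ - b • η, ξ - η⟫ ≥ (1/2) * (a + b) * d ^ (2:ℕ) := by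
    rw [e1, e2]; nlinarith [hab]
  -- a + b ≥ (d/2)^(p-2)
  have hmax : d / 2 ≤ max ‖ξ‖ ‖η‖ := by
    have h1 := norm_sub_le ξ η
    have h2 := le_max_left ‖ξ‖ ‖η‖
    have h3 := le_max_right ‖ξ‖ ‖η‖
    rw [hdd]; linarith
  have step4 : (d / 2) ^ (p - 2) ≤ a + b := by
    have h1 : (d / 2) ^ (p - 2) ≤ (max ‖ξ‖ ‖η‖) ^ (p - 2) :=
      Real.rpow_le_rpow (by positivity) hmax (by linarith)
    rcases le_total ‖ξ‖ ‖η‖ with h | h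
    · rw [max_eq_right h] at h1; linarith
    · rw [max_eq_left h] at h1; linarith
  -- key arithmetic: (1/2) * (d/2)^(p-2) * d^2 = 2^(1-p) * d^p
  have hA : d ^ (p - 2) * d ^ (2:ℕ) = d ^ p := by
    rw [← Real.rpow_natCast d 2, ← Real.rpow_add hd]
    norm_num
  have hB : (2:ℝ) ^ (1 - p) * (2:ℝ) ^ (p - 2) = 1 / 2 := by
    rw [← Real.rpow_add two_pos]
    norm_num [Real.rpow_neg_one]
  have h2pos : (0:ℝ) < (2:ℝ) ^ (p - 2) := Real.rpow_pos_of_pos two_pos _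
  have key : (1/2) * ((d / 2) ^ (p - 2)) * d ^ (2:ℕ) = 2 ^ (1 - p) * d ^ p := by
    rw [Real.div_rpow hd.le (by norm_num : (0:ℝ) ≤ 2)]
    field_simp
    nlinarith [hA, hB, Real.rpow_pos_of_pos hd p]
  have step5 : (1/2) * ((d / 2) ^ (p - 2)) * d ^ (2:ℕ) ≤ (1/2) * (a + b) * d ^ (2:ℕ) := by
    have : (0:ℝ) ≤ d ^ (2:ℕ) := by positivity
    nlinarith [step4]
  rw [← key]
  linarith [step3, step5]
end

section
/- Let H be a real inner product space and let 1 < p ≤ 2. Then there exists a constant c_p > 0, depending only on p, such that for all ξ, η ∈ H that are not both zero one has ⟨‖ξ‖^{p−2} ξ − ‖η‖^{p−2} η, ξ − η⟩ ≥ c_p (‖ξ‖ + ‖η‖)^{p−2} ‖ξ − η‖². -/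
open scoped RealInnerProductSpace

/-- Bernoulli-type tangent-line inequality for concave powers:
for `0 < q ≤ 1` and `0 < B ≤ A`, `q (A+B)^{q-1} (A-B) ≤ A^q - B^q`. -/
lemma pLaplace_key (q A B : ℝ) (hq0 : 0 < q) (hq1 : q ≤ 1) (hB : 0 < B) (hBA : B ≤ A) :
    q * (A + B) ^ (q - 1) * (A - B) ≤ A ^ q - B ^ q := by
  have hA : 0 < A := lt_of_lt_of_le hB hBA
  have hs : (-1 : ℝ) ≤ B / A - 1 := by
    have : (0 : ℝ) ≤ B / A := by positivity
    linarith
  have hb := rpow_one_add_le_one_add_mul_self hs hq0.le hq1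
  have h1 : (1 + (B / A - 1)) = B / A := by ring
  rw [h1] at hb
  have hdiv : (B / A) ^ q = B ^ q / A ^ q := Real.div_rpow hB.le hA.le q
  rw [hdiv] at hb
  have hAq : 0 < A ^ q := Real.rpow_pos_of_pos hA q
  have h2 : B ^ q ≤ A ^ q + q * A ^ (q - 1) * (B - A) := by
    have h3 : A ^ (q - 1) = A ^ q / A := by
      rw [Real.rpow_sub hA, Real.rpow_one]
    rw [h3]
    have h4 : B ^ q ≤ A ^ q * (1 + q * (B / A - 1)) := by
      calc B ^ q = (B ^ q / A ^ q) * A ^ q := by field_simp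
        _ ≤ (1 + q * (B / A - 1)) * A ^ q := mul_le_mul_of_nonneg_right hb hAq.le
        _ = A ^ q * (1 + q * (B / A - 1)) := by ring
    have h5 : A ^ q * (1 + q * (B / A - 1)) = A ^ q + q * (A ^ q / A) * (B - A) := by
      field_simp
    linarith [h4, h5.symm.le]
  have h6 : q * A ^ (q - 1) * (A - B) ≤ A ^ q - B ^ q := by linarith [h2]
  have h7 : (A + B) ^ (q - 1) ≤ A ^ (q - 1) :=
    Real.rpow_le_rpow_of_nonpos hA (by linarith) (by linarith)
  have hAB : (0 : ℝ) ≤ A - B := by linarith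
  have h8 : q * (A + B) ^ (q - 1) * (A - B) ≤ q * A ^ (q - 1) * (A - B) :=
    mul_le_mul_of_nonneg_right (mul_le_mul_of_nonneg_left h7 hq0.le) hAB
  linarith

/-- The purely real scalar inequality underlying the `p`-Laplace monotonicity, for
both vectors nonzero. -/
lemma pLaplace_real (p : ℝ) (hp1 : 1 < p) (hp2 : p ≤ 2) (A B t : ℝ)
    (hA : 0 < A) (hB : 0 < B) (ht : t ≤ A * B) :
    A ^ (p - 2) * A ^ 2 - (A ^ (p - 2) + B ^ (p - 2)) * t + B ^ (p - 2) * B ^ 2 ≥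
      (p - 1) * (A + B) ^ (p - 2) * (A ^ 2 - 2 * t + B ^ 2) := by
  set a : ℝ := A ^ (p - 2) with hadef
  set b : ℝ := B ^ (p - 2) with hbdef
  set S : ℝ := (A + B) ^ (p - 2) with hSdef
  set u : ℝ := A ^ (p - 1) with hudef
  set v : ℝ := B ^ (p - 1) with hvdef
  have hS : 0 < S := Real.rpow_pos_of_pos (by linarith) _
  have haS : S ≤ a := Real.rpow_le_rpow_of_nonpos hA (by linarith) (by linarith)
  have hbS : S ≤ b := Real.rpow_le_rpow_of_nonpos hB (by linarith) (by linarith)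
  have haA : a * A = u := by
    rw [hadef, hudef, show p - 1 = (p - 2) + 1 by ring, Real.rpow_add hA, Real.rpow_one]
  have hbB : b * B = v := by
    rw [hbdef, hvdef, show p - 1 = (p - 2) + 1 by ring, Real.rpow_add hB, Real.rpow_one]
  have K : (p - 1) * S * (A - B) ^ 2 ≤ (u - v) * (A - B) := by
    rcases le_total B A with hBA | hAB
    · have h := pLaplace_key (p - 1) A B (by linarith) (by linarith) hB hBA
      have hSeq : (A + B) ^ (p - 1 - 1) = S := by rw [hSdef]; ring_nf
      rw [hSeq] at h
      nlinarith [h, sub_nonneg.mpr hBA]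
    · have h := pLaplace_key (p - 1) B A (by linarith) (by linarith) hA hAB
      have hSeq : (B + A) ^ (p - 1 - 1) = S := by rw [hSdef]; ring_nf
      rw [hSeq] at h
      nlinarith [h, sub_nonneg.mpr hAB]
  have f1 : 0 ≤ (a + b - 2 * (p - 1) * S) * (A * B - t) := by
    apply mul_nonneg
    · nlinarith [haS, hbS, hS]
    · linarith
  have hprod : (a + b) * (A * B) = u * B + v * A := by rw [← haA, ← hbB]; ring
  have ha2 : a * A ^ 2 = u * A := by rw [← haA]; ring
  have hb2 : b * B ^ 2 = v * B := by rw [← hbB]; ring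
  clear_value a b S u v
  nlinarith [K, f1, hprod, ha2, hb2]

/-- Structural monotonicity of the `p`-Laplace vector field for `1 < p ≤ 2`: there is a
constant `c_p > 0`, depending only on `p`, such that in every real inner product space,
for `ξ, η` not both zero,
`⟨‖ξ‖^{p−2} ξ − ‖η‖^{p−2} η, ξ − η⟩ ≥ c_p (‖ξ‖ + ‖η‖)^{p−2} ‖ξ − η‖²`. -/
theorem pLaplace_monotonicity_le_two (p : ℝ) (hp1 : 1 < p) (hp2 : p ≤ 2) :
    ∃ c : ℝ, 0 < c ∧
      ∀ (H : Type) [NormedAddCommGroup H] [InnerProductSpace ℝ H] (ξ η : H),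
        ¬(ξ = 0 ∧ η = 0) →
        ⟪(‖ξ‖ ^ (p - 2)) • ξ - (‖η‖ ^ (p - 2)) • η, ξ - η⟫ ≥
          c * (‖ξ‖ + ‖η‖) ^ (p - 2) * ‖ξ - η‖ ^ (2 : ℝ) := by
  refine ⟨p - 1, by linarith, ?_⟩
  intro H _ _ ξ η hne
  have expand : ⟪(‖ξ‖ ^ (p - 2)) • ξ - (‖η‖ ^ (p - 2)) • η, ξ - η⟫ =
      ‖ξ‖ ^ (p - 2) * ‖ξ‖ ^ 2 - (‖ξ‖ ^ (p - 2) + ‖η‖ ^ (p - 2)) * ⟪ξ, η⟫ +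
        ‖η‖ ^ (p - 2) * ‖η‖ ^ 2 := by
    simp only [inner_sub_left, inner_sub_right, real_inner_smul_left,
      real_inner_self_eq_norm_sq]
    rw [real_inner_comm η ξ]
    ring
  have hnorm : ‖ξ - η‖ ^ (2 : ℝ) = ‖ξ‖ ^ 2 - 2 * ⟪ξ, η⟫ + ‖η‖ ^ 2 := by
    rw [Real.rpow_two, norm_sub_sq_real]
  rw [expand, hnorm]
  by_cases hp : p = 2
  · subst hp
    norm_num
  have hp2ne : p - 2 ≠ 0 := sub_ne_zero.mpr hp
  rcases eq_or_ne η 0 with hη | hη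
  · have hξ : ξ ≠ 0 := fun h => hne ⟨h, hη⟩
    have hA : 0 < ‖ξ‖ := norm_pos_iff.mpr hξ
    have ha0 : 0 < ‖ξ‖ ^ (p - 2) := Real.rpow_pos_of_pos hA _
    rw [hη]
    simp only [norm_zero, Real.zero_rpow hp2ne, inner_zero_right, add_zero, mul_zero,
      zero_mul, sub_zero, zero_pow, ne_eq, OfNat.ofNat_ne_zero, not_false_eq_true]
    nlinarith [mul_pos ha0 (pow_pos hA 2)]
  rcases eq_or_ne ξ 0 with hξ | hξ
  · have hB : 0 < ‖η‖ := norm_pos_iff.mpr hη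
    have hb0 : 0 < ‖η‖ ^ (p - 2) := Real.rpow_pos_of_pos hB _
    rw [hξ]
    simp only [norm_zero, Real.zero_rpow hp2ne, inner_zero_left, add_zero, mul_zero,
      zero_mul, sub_zero, zero_add, zero_sub, zero_pow, ne_eq, OfNat.ofNat_ne_zero,
      not_false_eq_true, neg_zero]
    nlinarith [mul_pos hb0 (pow_pos hB 2)]
  · have hA : 0 < ‖ξ‖ := norm_pos_iff.mpr hξ
    have hB : 0 < ‖η‖ := norm_pos_iff.mpr hη
    exact pLaplace_real p hp1 hp2 ‖ξ‖ ‖η‖ ⟪ξ, η⟫ hA hB (real_inner_le_norm ξ η)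
end

section
/- Let (Ω, μ) be a measure space, let H be a real inner product space, and let 1 < p < 2. Then there exists a constant C_p > 0, depending only on p, such that for all strongly measurable functions g, h : Ω → H with ∫_Ω ‖g‖^p dμ < ∞ and ∫_Ω ‖h‖^p dμ < ∞, one has ∫_Ω ‖g − h‖^p dμ ≤ C_p · ( ∫_Ω (‖g‖ + ‖h‖)^p dμ )^{(2−p)/2} · ( ∫_Ω ⟨‖g‖^{p−2} g − ‖h‖^{p−2} h, g − h⟩ dμ )^{p/2}, where the last integrand is nonnegative pointwise. -/
open MeasureTheory
open scoped ENNReal RealInnerProductSpace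

-- Bernoulli consequence: for 0<q<1, 0 ≤ B ≤ A: A^q - B^q ≥ q * A^(q-1) * (A - B)
lemma aux_bern {q A B : ℝ} (hq0 : 0 < q) (hq1 : q < 1) (hB : 0 ≤ B) (hBA : B ≤ A) (hA : 0 < A) :
    q * A ^ (q - 1) * (A - B) ≤ A ^ q - B ^ q := by
  have hs : (-1 : ℝ) ≤ B / A - 1 := by
    have : 0 ≤ B / A := div_nonneg hB hA.le
    linarith
  have h := rpow_one_add_le_one_add_mul_self hs hq0.le hq1.le
  rw [show (1:ℝ) + (B / A - 1) = B / A by ring] at h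
  -- (B/A)^q ≤ 1 + q*(B/A - 1)
  have hAq : (0:ℝ) < A ^ q := Real.rpow_pos_of_pos hA q
  have hBq : B ^ q = A ^ q * (B / A) ^ q := by
    rw [← Real.mul_rpow hA.le (div_nonneg hB hA.le), mul_div_cancel₀ _ hA.ne']
  have hA1 : A ^ q = A ^ (q - 1) * A := by
    rw [← Real.rpow_add_one hA.ne' (q - 1), sub_add_cancel]
  have h2 : B ^ q ≤ A ^ q * (1 + q * (B / A - 1)) := by
    rw [hBq]
    exact mul_le_mul_of_nonneg_left h hAq.le
  have h3 : A ^ q * (B / A) = A ^ (q - 1) * B := by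
    rw [hA1]; field_simp
  nlinarith [h3]

-- key real inequality
lemma aux_real {p A B T : ℝ} (hp1 : 1 < p) (hp2 : p < 2) (hB : 0 ≤ B) (hBA : B ≤ A)
    (hT : T ≤ A * B) :
    (p - 1) / 2 * (A ^ 2 + B ^ 2 - 2 * T) * (A + B) ^ (p - 2) ≤
      A ^ p + B ^ p - (A ^ (p - 2) + B ^ (p - 2)) * T := by
  have hA : 0 ≤ A := hB.trans hBA
  rcases eq_or_lt_of_le hA with hA0 | hA0
  · -- A = 0 hence B = 0, T ≤ 0
    have hB0 : B = 0 := le_antisymm (hBA.trans_eq hA0.symm) hB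
    rw [← hA0, hB0]
    have hz : (0:ℝ) ^ (p - 2) = 0 := Real.zero_rpow (by linarith)
    have hz2 : (0:ℝ) ^ p = 0 := Real.zero_rpow (by linarith)
    simp [hz, hz2]
  · -- A > 0
    have hS : (0:ℝ) < A + B := by linarith
    have hSp : (0:ℝ) ≤ (A + B) ^ (p - 2) := (Real.rpow_pos_of_pos hS _).le
    have h1 : (A + B) ^ (p - 2) ≤ A ^ (p - 2) :=
      Real.rpow_le_rpow_of_nonpos hA0 (by linarith) (by linarith)
    have hBp2 : (0:ℝ) ≤ B ^ (p - 2) := Real.rpow_nonneg hB _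
    -- slope: (p-1) * (A+B)^(p-2) ≤ A^(p-2) + B^(p-2)
    have hslope : (p - 1) * (A + B) ^ (p - 2) ≤ A ^ (p - 2) + B ^ (p - 2) := by
      nlinarith
    -- rpow splittings
    have hApm : A ^ p = A ^ (p - 1) * A := by
      rw [← Real.rpow_add_one hA0.ne' (p - 1), sub_add_cancel]
    have hApm2 : A ^ (p - 1) = A ^ (p - 2) * A := by
      rw [← Real.rpow_add_one hA0.ne' (p - 2)]; ring_nf
    have hBpm : B ^ p = B ^ (p - 1) * B := by
      rcases eq_or_lt_of_le hB with h0 | h0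
      · rw [← h0, Real.zero_rpow (by linarith), Real.zero_rpow (by linarith)]; ring
      · rw [← Real.rpow_add_one h0.ne' (p - 1), sub_add_cancel]
    have hBpm2 : B ^ (p - 1) = B ^ (p - 2) * B := by
      rcases eq_or_lt_of_le hB with h0 | h0
      · rw [← h0, Real.zero_rpow (by linarith), Real.zero_rpow (by linarith)]; ring
      · rw [← Real.rpow_add_one h0.ne' (p - 2)]; ring_nf
    -- 1D inequality : A^(p-1) - B^(p-1) ≥ (p-1)*(A+B)^(p-2)*(A-B)
    have hbern := aux_bern (q := p - 1) (A := A) (B := B) (by linarith) (by linarith) hB hBA hA0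
    rw [show p - 1 - 1 = p - 2 by ring] at hbern
    have h1d : (p - 1) * (A + B) ^ (p - 2) * (A - B) ≤ A ^ (p - 2) * A - B ^ (p - 2) * B := by
      have h2 : (p - 1) * (A + B) ^ (p - 2) * (A - B) ≤ (p - 1) * A ^ (p - 2) * (A - B) :=
        mul_le_mul_of_nonneg_right (mul_le_mul_of_nonneg_left h1 (by linarith)) (by linarith)
      rw [hApm2, hBpm2] at hbern
      linarith
    -- combine
    rw [hApm, hApm2, hBpm, hBpm2]
    nlinarith [mul_nonneg (sub_nonneg.2 hT) (sub_nonneg.2 hslope),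
      mul_nonneg (sub_nonneg.2 hBA) (sub_nonneg.2 h1d),
      mul_nonneg (mul_nonneg (by linarith : (0:ℝ) ≤ p - 1) hSp) (sq_nonneg (A - B))]

lemma aux_pow {p A : ℝ} (hp1 : 1 < p) (hp2 : p < 2) (hA : 0 ≤ A) : A ^ (p - 2) * A ^ 2 = A ^ p := by
  rcases eq_or_lt_of_le hA with h0 | h0
  · rw [← h0, Real.zero_rpow (by linarith : p - 2 ≠ 0), Real.zero_rpow (by linarith : p ≠ 0)]
    ring
  · rw [sq, ← mul_assoc, ← Real.rpow_add_one h0.ne' (p - 2), ← Real.rpow_add_one h0.ne' (p - 2 + 1)]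
    ring_nf

lemma aux_pointwise_le {H : Type*} [NormedAddCommGroup H] [InnerProductSpace ℝ H]
    {p : ℝ} (hp1 : 1 < p) (hp2 : p < 2) (a b : H) (hba : ‖b‖ ≤ ‖a‖) :
    (p - 1) / 2 * (‖a - b‖ ^ 2 * (‖a‖ + ‖b‖) ^ (p - 2)) ≤
      ⟪(‖a‖ ^ (p - 2)) • a - (‖b‖ ^ (p - 2)) • b, a - b⟫ := by
  have hT : ⟪a, b⟫ ≤ ‖a‖ * ‖b‖ := real_inner_le_norm a b
  have key := aux_real hp1 hp2 (norm_nonneg b) hba hT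
  have e1 : ‖a‖ ^ (p - 2) * ‖a‖ ^ 2 = ‖a‖ ^ p := aux_pow hp1 hp2 (norm_nonneg a)
  have e2 : ‖b‖ ^ (p - 2) * ‖b‖ ^ 2 = ‖b‖ ^ p := aux_pow hp1 hp2 (norm_nonneg b)
  rw [inner_sub_left, real_inner_smul_left, real_inner_smul_left, inner_sub_right,
    inner_sub_right, real_inner_self_eq_norm_sq, real_inner_self_eq_norm_sq,
    norm_sub_sq_real]
  have e3 : (inner ℝ b a : ℝ) = inner ℝ a b := real_inner_comm a b
  rw [e3]
  nlinarith [key, e1, e2]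

lemma aux_pointwise {H : Type*} [NormedAddCommGroup H] [InnerProductSpace ℝ H]
    {p : ℝ} (hp1 : 1 < p) (hp2 : p < 2) (a b : H) :
    (p - 1) / 2 * (‖a - b‖ ^ 2 * (‖a‖ + ‖b‖) ^ (p - 2)) ≤
      ⟪(‖a‖ ^ (p - 2)) • a - (‖b‖ ^ (p - 2)) • b, a - b⟫ := by
  rcases le_total ‖b‖ ‖a‖ with hba | hab
  · exact aux_pointwise_le hp1 hp2 a b hba
  · have h := aux_pointwise_le hp1 hp2 b a hab
    have hsym : ⟪(‖b‖ ^ (p - 2)) • b - (‖a‖ ^ (p - 2)) • a, b - a⟫ =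
        ⟪(‖a‖ ^ (p - 2)) • a - (‖b‖ ^ (p - 2)) • b, a - b⟫ := by
      rw [show (‖b‖ ^ (p - 2)) • b - (‖a‖ ^ (p - 2)) • a =
        -((‖a‖ ^ (p - 2)) • a - (‖b‖ ^ (p - 2)) • b) by abel,
        show b - a = -(a - b) by abel, inner_neg_neg]
    rw [← hsym, ← norm_sub_rev b a, ← add_comm ‖b‖ ‖a‖]
    exact h

lemma aux_factor {p D S : ℝ} (hp1 : 1 < p) (hp2 : p < 2) (hD : 0 ≤ D) (hS : 0 ≤ S)
    (hDS : D ≤ 2 * S) :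
    ENNReal.ofReal (D ^ p) =
      ENNReal.ofReal (S ^ p) ^ ((2 - p) / 2) *
        ENNReal.ofReal (D ^ 2 * S ^ (p - 2)) ^ (p / 2) := by
  have hp0 : (0:ℝ) < p := by linarith
  rcases eq_or_lt_of_le hS with hS0 | hS0
  · have hD0 : D = 0 := le_antisymm (by linarith) hD
    rw [hD0, ← hS0, Real.zero_rpow hp0.ne']
    simp [ENNReal.zero_rpow_of_pos (by linarith : (0:ℝ) < (2 - p) / 2)]
  rcases eq_or_lt_of_le hD with hD0 | hD0
  · rw [← hD0, Real.zero_rpow hp0.ne']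
    simp [ENNReal.zero_rpow_of_pos (by linarith : (0:ℝ) < p / 2)]
  · rw [ENNReal.ofReal_rpow_of_nonneg (Real.rpow_nonneg hS p) (by linarith : (0:ℝ) ≤ (2 - p) / 2),
      ENNReal.ofReal_rpow_of_nonneg
        (mul_nonneg (sq_nonneg D) (Real.rpow_nonneg hS _)) (by linarith : (0:ℝ) ≤ p / 2),
      ← ENNReal.ofReal_mul (Real.rpow_nonneg (Real.rpow_nonneg hS p) _)]
    congr 1
    rw [Real.mul_rpow (sq_nonneg D) (Real.rpow_nonneg hS _),
      ← Real.rpow_natCast D 2, ← Real.rpow_mul hD, ← Real.rpow_mul hS,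
      ← Real.rpow_mul hS]
    push_cast
    rw [show (2:ℝ) * (p / 2) = p by ring]
    rw [mul_comm (S ^ (p * ((2 - p) / 2))), mul_assoc, ← Real.rpow_add hS0,
      show (p - 2) * (p / 2) + p * ((2 - p) / 2) = 0 by ring, Real.rpow_zero, mul_one]

/-- Integral form of the monotonicity of the `p`-Laplace vector field for `1 < p < 2`:
there is `C_p > 0`, depending only on `p`, such that for all strongly measurable
`g, h : Ω → H` with `∫ ‖g‖^p dμ < ∞` and `∫ ‖h‖^p dμ < ∞`,
`∫ ‖g − h‖^p dμ ≤ C_p (∫ (‖g‖+‖h‖)^p dμ)^{(2−p)/2}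
  (∫ ⟨‖g‖^{p−2} g − ‖h‖^{p−2} h, g − h⟩ dμ)^{p/2}`,
the last integrand being nonnegative pointwise. -/
theorem pLaplace_integral_monotonicity (p : ℝ) (hp1 : 1 < p) (hp2 : p < 2) :
    ∃ C : ℝ, 0 < C ∧
      ∀ (Ω : Type) (H : Type) [MeasurableSpace Ω] [NormedAddCommGroup H]
        [InnerProductSpace ℝ H] (μ : Measure Ω) (g h : Ω → H),
        StronglyMeasurable g → StronglyMeasurable h →
        (∫⁻ x, ENNReal.ofReal (‖g x‖ ^ p) ∂μ) < ⊤ →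
        (∫⁻ x, ENNReal.ofReal (‖h x‖ ^ p) ∂μ) < ⊤ →
        (∫⁻ x, ENNReal.ofReal (‖g x - h x‖ ^ p) ∂μ) ≤
          ENNReal.ofReal C *
            (∫⁻ x, ENNReal.ofReal ((‖g x‖ + ‖h x‖) ^ p) ∂μ) ^ ((2 - p) / 2) *
            (∫⁻ x, ENNReal.ofReal
                (⟪(‖g x‖ ^ (p - 2)) • g x - (‖h x‖ ^ (p - 2)) • h x, g x - h x⟫) ∂μ)
              ^ (p / 2) := by
  have hc : (0:ℝ) < 2 / (p - 1) := by
    apply div_pos two_pos; linarith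
  refine ⟨(2 / (p - 1)) ^ (p / 2), Real.rpow_pos_of_pos hc _, ?_⟩
  intro Ω H _ _ _ μ g h hg hh _ _
  have mg : Measurable fun x => ‖g x‖ := hg.norm.measurable
  have mh : Measurable fun x => ‖h x‖ := hh.norm.measurable
  have mgh : Measurable fun x => ‖g x - h x‖ := (hg.sub hh).norm.measurable
  set F : Ω → ℝ≥0∞ := fun x => ENNReal.ofReal ((‖g x‖ + ‖h x‖) ^ p) ^ ((2 - p) / 2) with hFdef
  set G : Ω → ℝ≥0∞ :=
    fun x => ENNReal.ofReal (‖g x - h x‖ ^ 2 * (‖g x‖ + ‖h x‖) ^ (p - 2)) ^ (p / 2) with hGdef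
  have hF : AEMeasurable F μ :=
    (((mg.add mh).pow_const p).ennreal_ofReal.pow_const ((2 - p) / 2)).aemeasurable
  have hG : AEMeasurable G μ :=
    (((mgh.pow_const 2).mul ((mg.add mh).pow_const (p - 2))).ennreal_ofReal.pow_const
      (p / 2)).aemeasurable
  have hconj : Real.HolderConjugate (2 / (2 - p)) (2 / p) := by
    rw [Real.holderConjugate_iff]
    constructor
    · rw [lt_div_iff₀ (by linarith : (0:ℝ) < 2 - p)]; linarith
    · rw [inv_div, inv_div]; ring
  have key := ENNReal.lintegral_mul_le_Lp_mul_Lq μ hconj hF hG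
  -- identify the left side
  have hLHS : (∫⁻ x, ENNReal.ofReal (‖g x - h x‖ ^ p) ∂μ) = ∫⁻ x, (F * G) x ∂μ := by
    refine lintegral_congr fun x => ?_
    have := aux_factor (D := ‖g x - h x‖) (S := ‖g x‖ + ‖h x‖) hp1 hp2 (norm_nonneg _)
      (by positivity) (by linarith [norm_sub_le (g x) (h x), norm_nonneg (g x), norm_nonneg (h x)])
    simpa [hFdef, hGdef] using this
  -- identify the two factors in Hölder
  have hFpow : (∫⁻ x, F x ^ (2 / (2 - p)) ∂μ) = ∫⁻ x, ENNReal.ofReal ((‖g x‖ + ‖h x‖) ^ p) ∂μ := by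
    refine lintegral_congr fun x => ?_
    rw [hFdef, ← ENNReal.rpow_mul,
      show (2 - p) / 2 * (2 / (2 - p)) = 1 by
        rw [div_mul_div_comm, mul_comm]
        exact div_self (mul_ne_zero two_ne_zero (by linarith)), ENNReal.rpow_one]
  have hGpow : (∫⁻ x, G x ^ (2 / p) ∂μ) =
      ∫⁻ x, ENNReal.ofReal (‖g x - h x‖ ^ 2 * (‖g x‖ + ‖h x‖) ^ (p - 2)) ∂μ := by
    refine lintegral_congr fun x => ?_
    rw [hGdef, ← ENNReal.rpow_mul, show p / 2 * (2 / p) = 1 by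
        rw [div_mul_div_comm, mul_comm]
        exact div_self (mul_ne_zero two_ne_zero (by linarith)), ENNReal.rpow_one]
  rw [hLHS]
  rw [hFpow, hGpow, show 1 / (2 / (2 - p)) = (2 - p) / 2 by rw [one_div_div],
    show 1 / (2 / p) = p / 2 by rw [one_div_div]] at key
  -- bound the second factor using the pointwise monotonicity
  have hY : (∫⁻ x, ENNReal.ofReal (‖g x - h x‖ ^ 2 * (‖g x‖ + ‖h x‖) ^ (p - 2)) ∂μ) ≤
      ENNReal.ofReal (2 / (p - 1)) *
        ∫⁻ x, ENNReal.ofReal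
          (⟪(‖g x‖ ^ (p - 2)) • g x - (‖h x‖ ^ (p - 2)) • h x, g x - h x⟫) ∂μ := by
    rw [← lintegral_const_mul' _ _ ENNReal.ofReal_ne_top]
    refine lintegral_mono fun x => ?_
    rw [← ENNReal.ofReal_mul hc.le]
    refine ENNReal.ofReal_le_ofReal ?_
    have hpt := aux_pointwise hp1 hp2 (g x) (h x)
    have hid : 2 / (p - 1) * ((p - 1) / 2) = 1 := by
      rw [div_mul_div_comm, mul_comm]
      exact div_self (mul_ne_zero (by linarith) two_ne_zero)
    calc ‖g x - h x‖ ^ 2 * (‖g x‖ + ‖h x‖) ^ (p - 2)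
        = 2 / (p - 1) * ((p - 1) / 2 * (‖g x - h x‖ ^ 2 * (‖g x‖ + ‖h x‖) ^ (p - 2))) := by
          rw [← mul_assoc, hid, one_mul]
      _ ≤ 2 / (p - 1) * ⟪(‖g x‖ ^ (p - 2)) • g x - (‖h x‖ ^ (p - 2)) • h x, g x - h x⟫ :=
          mul_le_mul_of_nonneg_left hpt hc.le
  calc ∫⁻ x, (F * G) x ∂μ
      ≤ (∫⁻ x, ENNReal.ofReal ((‖g x‖ + ‖h x‖) ^ p) ∂μ) ^ ((2 - p) / 2) *
        (∫⁻ x, ENNReal.ofReal (‖g x - h x‖ ^ 2 * (‖g x‖ + ‖h x‖) ^ (p - 2)) ∂μ) ^ (p / 2) := key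
    _ ≤ (∫⁻ x, ENNReal.ofReal ((‖g x‖ + ‖h x‖) ^ p) ∂μ) ^ ((2 - p) / 2) *
        (ENNReal.ofReal (2 / (p - 1)) *
          ∫⁻ x, ENNReal.ofReal
            (⟪(‖g x‖ ^ (p - 2)) • g x - (‖h x‖ ^ (p - 2)) • h x, g x - h x⟫) ∂μ) ^ (p / 2) :=
        mul_le_mul_right (ENNReal.rpow_le_rpow hY (by linarith)) _
    _ = ENNReal.ofReal ((2 / (p - 1)) ^ (p / 2)) *
        (∫⁻ x, ENNReal.ofReal ((‖g x‖ + ‖h x‖) ^ p) ∂μ) ^ ((2 - p) / 2) *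
        (∫⁻ x, ENNReal.ofReal
            (⟪(‖g x‖ ^ (p - 2)) • g x - (‖h x‖ ^ (p - 2)) • h x, g x - h x⟫) ∂μ) ^ (p / 2) := by
        rw [ENNReal.mul_rpow_of_nonneg _ _ (by linarith : (0:ℝ) ≤ p / 2),
          ENNReal.ofReal_rpow_of_nonneg hc.le (by linarith : (0:ℝ) ≤ p / 2)]
        ring
end
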